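/- arXiv:1102.0330 — 8 statements merged into one kernel-verified Lean document; each statement's English description precedes it below -/
import Mathlib

section
/- Let E(φ) = Σ_{n≥0} e_{2n+1} cos((2n+1)φ) with e_1 > 0, e_{2n+1} ≤ 0 for all n ≥ 1, Σ_{n≥0} e_{2n+1} = 1, and Σ_{n≥0} (2n+1)² e_{2n+1} ≥ 0 (all series absolutely convergent). Then there exist coefficients p_{2m+1} ≥ 0 with Σ_{m≥0} p_{2m+1} = 1 such that cos φ = Σ_{m≥0} p_{2m+1} E((2m+1)φ) for all real φ. -/
/-!
Expanding `∑ₘ pₘ E((2m+1)φ)` gives `∑_N c_N cos((2N+1)φ)` with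
`c_N = ∑_{(2i+1)(2j+1) = 2N+1} pᵢ eⱼ`, so `p` has to be the inverse of `e` for this
convolution over odd integers, which is solved recursively from `e₀ ≠ 0`. As `e₀ > 0` and
`eⱼ ≤ 0` for `j ≥ 1`, the recursion keeps `p ≥ 0`. Summing the convolution identity over
`N < M` and comparing with the full square `i, j < M`, whose extra terms are `≤ 0`, gives
`∑_{m<M} pₘ ≤ (∑_{m<M} pₘ)(∑_{j<M} eⱼ) ≤ 1`, since the partial sums of `e` decrease to `1`.
So `p` is summable, the double series may be regrouped, and it collapses to its `N = 0` term.
-/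

open Real Finset

namespace CosDecomp

-- `i : ℕ` stands for the odd number `2 * i + 1`.
def oddMulIndex (x : ℕ × ℕ) : ℕ := 2 * x.1 * x.2 + x.1 + x.2

lemma two_mul_oddMulIndex_add_one (x : ℕ × ℕ) :
    2 * oddMulIndex x + 1 = (2 * x.1 + 1) * (2 * x.2 + 1) := by
  unfold oddMulIndex; ring

lemma le_oddMulIndex (x : ℕ × ℕ) : x.1 + x.2 ≤ oddMulIndex x := by
  unfold oddMulIndex; omega

lemma oddMulIndex_mk_zero (i : ℕ) : oddMulIndex (i, 0) = i := by
  simp [oddMulIndex]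

def oddFiber (N : ℕ) : Finset (ℕ × ℕ) :=
  (range (N + 1) ×ˢ range (N + 1)).filter (oddMulIndex · = N)

lemma mem_oddFiber {N : ℕ} {x : ℕ × ℕ} : x ∈ oddFiber N ↔ oddMulIndex x = N := by
  have := le_oddMulIndex x
  simp only [oddFiber, mem_filter, mem_product, mem_range]
  omega

lemma fst_lt_of_mem_oddFiber {N : ℕ} {x : ℕ × ℕ} (hx : x ∈ oddFiber N) :
    x.1 < N ↔ x.2 ≠ 0 := by
  rw [← mem_oddFiber.1 hx]
  obtain ⟨i, j⟩ := x
  cases j with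
  | zero => simp [oddMulIndex_mk_zero]
  | succ j => have := le_oddMulIndex (i, j + 1); simp only at this ⊢; omega

-- On `oddFiber (N + 1)` the guard `x.1 < N + 1` excludes exactly `(N + 1, 0)`.
noncomputable def oddConvInv (e : ℕ → ℝ) : ℕ → ℝ
  | 0 => (e 0)⁻¹
  | N + 1 => -(e 0)⁻¹ *
      ∑ x ∈ oddFiber (N + 1), if _ : x.1 < N + 1 then oddConvInv e x.1 * e x.2 else 0

variable {e : ℕ → ℝ}

lemma oddConvInv_nonneg (he0 : 0 < e 0) (hneg : ∀ n, 1 ≤ n → e n ≤ 0) (N : ℕ) :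
    0 ≤ oddConvInv e N := by
  induction N using Nat.strong_induction_on with
  | _ N ih =>
    cases N with
    | zero => rw [oddConvInv]; positivity
    | succ N =>
      rw [oddConvInv, neg_mul, neg_nonneg]
      refine mul_nonpos_of_nonneg_of_nonpos (by positivity) (sum_nonpos fun x hx => ?_)
      split_ifs with hlt
      · exact mul_nonpos_of_nonneg_of_nonpos (ih _ hlt)
          (hneg _ (Nat.one_le_iff_ne_zero.2 ((fst_lt_of_mem_oddFiber hx).1 hlt)))
      · rfl

theorem sum_oddFiber_oddConvInv_mul (he0 : e 0 ≠ 0) (N : ℕ) :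
    ∑ x ∈ oddFiber N, oddConvInv e x.1 * e x.2 = if N = 0 then 1 else 0 := by
  cases N with
  | zero =>
    have : oddFiber 0 = {(0, 0)} := by decide
    simp [this, oddConvInv, he0]
  | succ N =>
    have hsplit : ∀ x ∈ oddFiber (N + 1), oddConvInv e x.1 * e x.2 =
        (if _ : x.1 < N + 1 then oddConvInv e x.1 * e x.2 else 0) +
          if x = (N + 1, 0) then oddConvInv e (N + 1) * e 0 else 0 := by
      intro x hx
      by_cases hlt : x.1 < N + 1
      · have : x ≠ (N + 1, 0) := by rintro rfl; simp at hlt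
        simp [hlt, this]
      · have hx2 : x.2 = 0 := by simpa using mt (fst_lt_of_mem_oddFiber hx).2 hlt
        have hx1 : x.1 = N + 1 := by
          have := mem_oddFiber.1 hx
          rw [← Prod.mk.eta (p := x), hx2, oddMulIndex_mk_zero] at this
          exact this
        simp [hx2, Prod.ext_iff, hx1]
    have hmem : (N + 1, 0) ∈ oddFiber (N + 1) := mem_oddFiber.2 (oddMulIndex_mk_zero _)
    rw [sum_congr rfl hsplit, sum_add_distrib, sum_ite_eq', if_pos hmem, oddConvInv.eq_2,
      if_neg N.succ_ne_zero]
    field_simp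
    ring

lemma pairwiseDisjoint_oddFiber (s : Set ℕ) : s.PairwiseDisjoint oddFiber :=
  fun _ _ _ _ hne => disjoint_left.2 fun _ h h' =>
    hne ((mem_oddFiber.1 h).symm.trans (mem_oddFiber.1 h'))

lemma biUnion_oddFiber_subset (M : ℕ) :
    (range M).biUnion oddFiber ⊆ range M ×ˢ range M := by
  intro x hx
  obtain ⟨N, hN, hxN⟩ := mem_biUnion.1 hx
  have := le_oddMulIndex x
  rw [mem_oddFiber.1 hxN] at this
  simp only [mem_range, mem_product] at hN ⊢
  omega

lemma mk_zero_mem_biUnion_oddFiber {M i : ℕ} (hi : i < M) :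
    (i, 0) ∈ (range M).biUnion oddFiber :=
  mem_biUnion.2 ⟨i, mem_range.2 hi, mem_oddFiber.2 (oddMulIndex_mk_zero i)⟩

lemma tsum_le_sum_range_of_nonpos {f : ℕ → ℝ} (hf : Summable f) {M : ℕ}
    (h : ∀ n, M ≤ n → f n ≤ 0) : ∑' n, f n ≤ ∑ n ∈ range M, f n := by
  rw [← hf.sum_add_tsum_nat_add M]
  exact add_le_of_nonpos_right (tsum_nonpos fun n => h _ (Nat.le_add_left M n))

lemma sum_range_oddConvInv_le_one (he0 : 0 < e 0) (hneg : ∀ n, 1 ≤ n → e n ≤ 0)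
    (he : Summable e) (hnorm : ∑' n, e n = 1) (M : ℕ) :
    ∑ i ∈ range M, oddConvInv e i ≤ 1 := by
  rcases Nat.eq_zero_or_pos M with rfl | hM
  · simp
  set f : ℕ × ℕ → ℝ := fun x => oddConvInv e x.1 * e x.2
  have hS : 0 ≤ ∑ i ∈ range M, oddConvInv e i :=
    sum_nonneg fun i _ => oddConvInv_nonneg he0 hneg i
  have he_partial : 1 ≤ ∑ j ∈ range M, e j :=
    hnorm ▸ tsum_le_sum_range_of_nonpos he fun n hn => hneg n (hM.trans_le hn)
  have hsquare : ∑ x ∈ range M ×ˢ range M, f x ≤ ∑ x ∈ (range M).biUnion oddFiber, f x := by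
    rw [← sum_sdiff (biUnion_oddFiber_subset M)]
    refine add_le_of_nonpos_left (sum_nonpos fun x hx => ?_)
    obtain ⟨hxsq, hxT⟩ := mem_sdiff.1 hx
    have hx2 : x.2 ≠ 0 := fun h => hxT <| (Prod.ext rfl h : x = (x.1, 0)) ▸
      mk_zero_mem_biUnion_oddFiber (mem_range.1 (mem_product.1 hxsq).1)
    exact mul_nonpos_of_nonneg_of_nonpos (oddConvInv_nonneg he0 hneg _)
      (hneg _ (Nat.one_le_iff_ne_zero.2 hx2))
  have htriangle : ∑ x ∈ (range M).biUnion oddFiber, f x = 1 := by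
    rw [sum_biUnion (pairwiseDisjoint_oddFiber _)]
    simp only [f, sum_oddFiber_oddConvInv_mul he0.ne', sum_ite_eq', mem_range, hM, if_true]
  calc ∑ i ∈ range M, oddConvInv e i
      ≤ (∑ i ∈ range M, oddConvInv e i) * ∑ j ∈ range M, e j :=
        le_mul_of_one_le_right hS he_partial
    _ = ∑ x ∈ range M ×ˢ range M, f x := by rw [sum_mul_sum, sum_product]
    _ ≤ 1 := htriangle ▸ hsquare

lemma tsum_eq_tsum_sum_oddFiber {α : Type*} [AddCommGroup α] [UniformSpace α]
    [IsUniformAddGroup α] [CompleteSpace α] [T2Space α] {f : ℕ × ℕ → α} (hf : Summable f) :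
    ∑' x, f x = ∑' N, ∑ x ∈ oddFiber N, f x := by
  rw [← (hf.hasSum.tsum_fiberwise oddMulIndex).tsum_eq]
  refine tsum_congr fun N => ?_
  have : oddMulIndex ⁻¹' {N} = ↑(oddFiber N) := by ext; simp [mem_oddFiber]
  rw [this, Finset.tsum_subtype']

theorem tsum_mul_tsum_oddMulIndex {p e : ℕ → ℝ} (hp : Summable p) (he : Summable e)
    (hconv : ∀ N, ∑ x ∈ oddFiber N, p x.1 * e x.2 = if N = 0 then 1 else 0)
    (u : ℕ → ℝ) (hu : ∀ N, |u N| ≤ 1) :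
    ∑' m, p m * ∑' n, e n * u (oddMulIndex (m, n)) = u 0 := by
  set g : ℕ × ℕ → ℝ := fun x => p x.1 * (e x.2 * u (oddMulIndex x))
  have hpe : Summable fun x : ℕ × ℕ => |p x.1 * e x.2| :=
    (summable_mul_of_summable_norm hp.norm he.norm).abs
  have hg : Summable g := hpe.of_norm_bounded fun x => by
    rw [Real.norm_eq_abs, abs_mul, abs_mul, abs_mul, ← mul_assoc]
    exact mul_le_of_le_one_right (by positivity) (hu _)
  calc ∑' m, p m * ∑' n, e n * u (oddMulIndex (m, n))
      = ∑' m, ∑' n, g (m, n) := tsum_congr fun m => tsum_mul_left.symm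
    _ = ∑' x, g x := (hg.tsum_prod' hg.prod_factor).symm
    _ = ∑' N, (if N = 0 then 1 else 0) * u N := by
      rw [tsum_eq_tsum_sum_oddFiber hg]
      refine tsum_congr fun N => ?_
      rw [← hconv N, sum_mul]
      refine sum_congr rfl fun x hx => ?_
      simp only [g, mem_oddFiber.1 hx, mul_assoc]
    _ = u 0 := by simp

end CosDecomp

open CosDecomp in
theorem cosine_decomposition_general (e : ℕ → ℝ)
    (he1 : 0 < e 0)
    (hneg : ∀ n : ℕ, 1 ≤ n → e n ≤ 0)
    (hnorm : ∑' n : ℕ, e n = 1) :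
    ∃ p : ℕ → ℝ, (∀ m : ℕ, 0 ≤ p m) ∧ Summable p ∧ (∑' m : ℕ, p m = 1) ∧
      ∀ φ : ℝ,
        ∑' m : ℕ, p m * ∑' n : ℕ, e n * Real.cos ((2 * (n : ℝ) + 1) * ((2 * (m : ℝ) + 1) * φ))
          = Real.cos φ := by
  have he : Summable e := by
    by_contra h
    rw [tsum_eq_zero_of_not_summable h] at hnorm
    exact zero_ne_one hnorm
  have hp0 := oddConvInv_nonneg he1 hneg
  have hp : Summable (oddConvInv e) :=
    summable_of_sum_range_le hp0 (sum_range_oddConvInv_le_one he1 hneg he hnorm)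
  have key := tsum_mul_tsum_oddMulIndex hp he (sum_oddFiber_oddConvInv_mul he1.ne')
  refine ⟨oddConvInv e, hp0, hp, ?_, fun φ => ?_⟩
  · simpa [hnorm] using key (fun _ => 1) (by simp)
  · have harg (m n : ℕ) : (2 * (n : ℝ) + 1) * ((2 * (m : ℝ) + 1) * φ) =
        (2 * (oddMulIndex (m, n) : ℝ) + 1) * φ := by
      have := congrArg (Nat.cast (R := ℝ)) (two_mul_oddMulIndex_add_one (m, n))
      push_cast at this
      rw [this]
      ring
    simpa [harg] using key (fun N => Real.cos ((2 * N + 1) * φ)) (fun N => abs_cos_le_one _)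

/-- Lemma 1: if `E(φ) = Σ_{n≥0} e_{2n+1} cos((2n+1)φ)` with `e₁ > 0`, `e_{2n+1} ≤ 0` for
`n ≥ 1`, `Σ e_{2n+1} = 1` and `Σ (2n+1)² e_{2n+1} ≥ 0` (all series absolutely convergent),
then `cos φ = Σ_{m≥0} p_{2m+1} E((2m+1)φ)` for some probabilities `p_{2m+1} ≥ 0`
summing to `1`. -/
theorem cosine_decomposition (e : ℕ → ℝ)
    (habs : Summable fun n : ℕ => (2 * (n : ℝ) + 1) ^ 2 * |e n|)
    (he1 : 0 < e 0)
    (hneg : ∀ n : ℕ, 1 ≤ n → e n ≤ 0)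
    (hnorm : ∑' n : ℕ, e n = 1)
    (hE'' : 0 ≤ ∑' n : ℕ, (2 * (n : ℝ) + 1) ^ 2 * e n) :
    ∃ p : ℕ → ℝ, (∀ m : ℕ, 0 ≤ p m) ∧ Summable p ∧ (∑' m : ℕ, p m = 1) ∧
      ∀ φ : ℝ,
        ∑' m : ℕ, p m * ∑' n : ℕ, e n * Real.cos ((2 * (n : ℝ) + 1) * ((2 * (m : ℝ) + 1) * φ))
          = Real.cos φ :=
  cosine_decomposition_general e he1 hneg hnorm
end

section
/- Define p_1 = 1/e_1 and, recursively for m ≥ 1, p_{2m+1} = -(1/e_1) Σ_{k=0}^{m-1} Σ_{n=1}^{m} p_{2k+1} e_{2n+1} δ_{(2k+1)(2n+1), 2m+1}. Then p_{2m+1} = (1/e_1) Σ_{ℓ_3, ℓ_5, ...} [(ℓ_3+ℓ_5+⋯)!/(ℓ_3! ℓ_5! ⋯)] (-e_3/e_1)^{ℓ_3} (-e_5/e_1)^{ℓ_5} ⋯, where the finite sum runs over all tuples of nonnegative integers (ℓ_3, ℓ_5, ℓ_7, ...) with 3^{ℓ_3} 5^{ℓ_5} 7^{ℓ_7} ⋯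 = 2m+1. -/
/-!
Put `S_m = Σ_ℓ multinomial(ℓ) ∏ w_n ^ ℓ_n` with `w_n = -e_{2n+1}/e_1`, the sum running over the
factorizations `ℓ` of `2m+1`. Pascal's rule `multinomial ℓ = Σ_{n ∈ supp ℓ} multinomial (ℓ - δ_n)`,
together with the bijection that removes one factor `2n+1` from a factorization of `2m+1` (leaving
a factorization of `2k+1`, where `(2k+1)(2n+1) = 2m+1`), gives `S_0 = 1` and
`S_m = Σ_{k,n} δ_{(2k+1)(2n+1),2m+1} w_n S_k`. This is the recursion satisfied by `e_1 p_m`, so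
strong induction on `m` gives `p_m = S_m / e_1`.
-/

open Finset

namespace Finsupp

variable {α : Type*}

theorem tsub_single_add_single_of_mem_support {ℓ : α →₀ ℕ} {a : α} (ha : a ∈ ℓ.support) :
    ℓ - single a 1 + single a 1 = ℓ :=
  tsub_add_cancel_of_le <| single_le_iff.2 <| Nat.one_le_iff_ne_zero.2 <| mem_support_iff.1 ha

theorem prod_pow_add_single {M : Type*} [CommMonoid M] (f : α → M) (ℓ : α →₀ ℕ) (a : α) :
    (ℓ + single a 1).prod (fun i k => f i ^ k) = (ℓ.prod fun i k => f i ^ k) * f a := by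
  rw [prod_add_index' (fun _ => pow_zero _) (fun _ _ _ => pow_add _ _ _),
    prod_single_index (h := fun i k => f i ^ k) (pow_zero _), pow_one]

theorem sum_add_single_mul_multinomial (ℓ : α →₀ ℕ) (a : α) :
    ((ℓ + single a 1).sum fun _ => id) * ℓ.multinomial
      = (ℓ a + 1) * (ℓ + single a 1).multinomial := by
  classical
  have hsum : ((ℓ + single a 1).sum fun _ => id) = (ℓ.sum fun _ => id) + 1 := by
    rw [sum_add_index' (fun _ => rfl) (fun _ _ _ => rfl), sum_single_index rfl, id]
  have hupdate : (ℓ + single a 1).update a 0 = ℓ.update a 0 := by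
    ext i
    rcases eq_or_ne i a with rfl | h <;> simp [*]
  rw [multinomial_update a ℓ, multinomial_update a (ℓ + single a 1), hupdate, hsum,
    add_apply, single_eq_same, ← mul_assoc, Nat.add_one_mul_choose_eq]
  ring

theorem multinomial_eq_sum_multinomial_tsub_single {ℓ : α →₀ ℕ} (hℓ : ℓ ≠ 0) :
    ℓ.multinomial = ∑ a ∈ ℓ.support, (ℓ - single a 1).multinomial := by
  have hdeg : 0 < ℓ.sum fun _ => id :=
    Finset.sum_pos (fun a ha => Nat.pos_of_ne_zero (mem_support_iff.1 ha))
      (support_nonempty_iff.2 hℓ)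
  refine Nat.eq_of_mul_eq_mul_left hdeg ?_
  rw [Finset.mul_sum]
  refine (Finset.sum_mul ..).trans (Finset.sum_congr rfl fun a ha => ?_)
  have h := sum_add_single_mul_multinomial (ℓ - single a 1) a
  have hla := congr($(tsub_single_add_single_of_mem_support ha) a)
  rw [tsub_single_add_single_of_mem_support ha] at h
  rw [h, ← hla, add_apply, single_eq_same]
  rfl

variable {R : Type*} [CommSemiring R]

noncomputable def weightedMultinomial (w : α → R) (ℓ : α →₀ ℕ) : R :=
  ℓ.multinomial * ℓ.prod fun a k => w a ^ k

theorem weightedMultinomial_zero (w : α → R) : weightedMultinomial w 0 = 1 := by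
  simp [weightedMultinomial, multinomial_eq]

theorem weightedMultinomial_eq_sum (w : α → R) {ℓ : α →₀ ℕ} (hℓ : ℓ ≠ 0) :
    weightedMultinomial w ℓ = ∑ a ∈ ℓ.support, w a * weightedMultinomial w (ℓ - single a 1) := by
  rw [weightedMultinomial, multinomial_eq_sum_multinomial_tsub_single hℓ, Nat.cast_sum,
    Finset.sum_mul]
  refine Finset.sum_congr rfl fun a ha => ?_
  have h := prod_pow_add_single w (ℓ - single a 1) a
  rw [tsub_single_add_single_of_mem_support ha] at h
  rw [h, weightedMultinomial]
  ring

end Finsupp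

open Finsupp (single mem_support_iff notMem_support_iff support_add support_single_subset
  support_tsub prod_pow_add_single tsub_single_add_single_of_mem_support weightedMultinomial
  weightedMultinomial_zero weightedMultinomial_eq_sum)

/-- `ℓ n` is the paper's `ℓ_{2n+1}`, the multiplicity of the factor `2n+1`. -/
def oddFactorProd (ℓ : ℕ →₀ ℕ) : ℕ :=
  ℓ.prod fun n k => (2 * n + 1) ^ k

theorem pow_dvd_oddFactorProd (ℓ : ℕ →₀ ℕ) (n : ℕ) : (2 * n + 1) ^ ℓ n ∣ oddFactorProd ℓ := by
  by_cases hn : n ∈ ℓ.support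
  · exact dvd_prod_of_mem _ hn
  · rw [notMem_support_iff.1 hn, pow_zero]
    exact one_dvd _

theorem odd_oddFactorProd (ℓ : ℕ →₀ ℕ) : Odd (oddFactorProd ℓ) :=
  prod_induction _ Odd (fun _ _ => Odd.mul) odd_one fun n _ => (odd_two_mul_add_one n).pow

theorem oddFactorProd_add_single (ℓ : ℕ →₀ ℕ) (n : ℕ) :
    oddFactorProd (ℓ + single n 1) = oddFactorProd ℓ * (2 * n + 1) :=
  prod_pow_add_single _ ℓ n

/-- The box `ℓ n < 2m+1` on `[1, m]` only makes the set visibly finite; the defining conditions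
are those of `mem_oddFactorizations`. -/
noncomputable def oddFactorizations (m : ℕ) : Finset (ℕ →₀ ℕ) :=
  ((Icc 1 m).finsupp fun _ => range (2 * m + 1)).filter fun ℓ => oddFactorProd ℓ = 2 * m + 1

theorem mem_oddFactorizations {m : ℕ} {ℓ : ℕ →₀ ℕ} :
    ℓ ∈ oddFactorizations m ↔ (∀ n ∈ ℓ.support, 1 ≤ n) ∧ oddFactorProd ℓ = 2 * m + 1 := by
  simp only [oddFactorizations, mem_filter, mem_finsupp_iff, mem_range]
  refine ⟨fun ⟨⟨hsupp, _⟩, hprod⟩ => ⟨fun n hn => (mem_Icc.1 (hsupp hn)).1, hprod⟩, ?_⟩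
  rintro ⟨hpos, hprod⟩
  have hle : ∀ n, (2 * n + 1) ^ ℓ n ≤ 2 * m + 1 := fun n =>
    Nat.le_of_dvd (Nat.succ_pos _) (hprod ▸ pow_dvd_oddFactorProd ℓ n)
  refine ⟨⟨fun n hn => mem_Icc.2 ⟨hpos n hn, ?_⟩, fun n hn => ?_⟩, hprod⟩
  · have := (Nat.le_self_pow (mem_support_iff.1 hn) _).trans (hle n)
    omega
  · have := (mem_Icc.1 hn).1
    exact (Nat.lt_pow_self (by omega)).trans_le (hle n)

theorem oddFactorizations_zero : oddFactorizations 0 = {0} := by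
  ext ℓ
  rw [mem_singleton]
  refine ⟨fun h => ?_, fun h => mem_oddFactorizations.2 ⟨by simp [h], by simp [h, oddFactorProd]⟩⟩
  simp only [oddFactorizations, mem_filter, mem_finsupp_iff] at h
  exact Finsupp.support_eq_empty.1 (subset_empty.1 (by simpa using h.1.1))

theorem zero_notMem_oddFactorizations {m : ℕ} (hm : m ≠ 0) : 0 ∉ oddFactorizations m := by
  simp [mem_oddFactorizations, oddFactorProd, hm]

def oddDivisorPairs (m : ℕ) : Finset (ℕ × ℕ) :=
  (range m ×ˢ Icc 1 m).filter fun q => (2 * q.1 + 1) * (2 * q.2 + 1) = 2 * m + 1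

theorem mem_oddDivisorPairs {m k n : ℕ} :
    (k, n) ∈ oddDivisorPairs m ↔ 1 ≤ n ∧ (2 * k + 1) * (2 * n + 1) = 2 * m + 1 := by
  simp only [oddDivisorPairs, mem_filter, mem_product, mem_range, mem_Icc]
  constructor
  · rintro ⟨⟨-, hn, -⟩, h⟩
    exact ⟨hn, h⟩
  · rintro ⟨hn, h⟩
    exact ⟨⟨by nlinarith, hn, by nlinarith⟩, h⟩

theorem tsub_single_mem_oddFactorizations {m n : ℕ} {ℓ : ℕ →₀ ℕ} (hℓ : ℓ ∈ oddFactorizations m)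
    (hn : n ∈ ℓ.support) :
    (oddFactorProd (ℓ - single n 1) / 2, n) ∈ oddDivisorPairs m ∧
      ℓ - single n 1 ∈ oddFactorizations (oddFactorProd (ℓ - single n 1) / 2) := by
  rw [mem_oddFactorizations] at hℓ ⊢
  rw [mem_oddDivisorPairs, Nat.two_mul_div_two_add_one_of_odd (odd_oddFactorProd _),
    ← hℓ.2, ← oddFactorProd_add_single, tsub_single_add_single_of_mem_support hn]
  exact ⟨⟨hℓ.1 n hn, rfl⟩, fun i hi => hℓ.1 i (support_tsub hi), rfl⟩

theorem add_single_mem_oddFactorizations {m k n : ℕ} {ℓ : ℕ →₀ ℕ}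
    (hkn : (k, n) ∈ oddDivisorPairs m) (hℓ : ℓ ∈ oddFactorizations k) :
    ℓ + single n 1 ∈ oddFactorizations m := by
  rw [mem_oddDivisorPairs] at hkn
  rw [mem_oddFactorizations] at hℓ ⊢
  refine ⟨fun i hi => ?_, by rw [oddFactorProd_add_single, hℓ.2, hkn.2]⟩
  rcases mem_union.1 (support_add hi) with hi | hi
  · exact hℓ.1 i hi
  · rw [mem_singleton.1 (support_single_subset hi)]
    exact hkn.1

/-- Removing one factor `2n+1` from a factorization of `2m+1` leaves a factorization of some
`2k+1` with `(2k+1)(2n+1) = 2m+1`, and every such triple arises exactly once. -/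
theorem sum_sigma_oddFactorizations_support {M : Type*} [AddCommMonoid M]
    (G : ℕ → (ℕ →₀ ℕ) → M) (m : ℕ) :
    ∑ x ∈ (oddFactorizations m).sigma (·.support), G x.2 (x.1 - single x.2 1)
      = ∑ y ∈ (oddDivisorPairs m).sigma (oddFactorizations ·.1), G y.1.2 y.2 := by
  refine sum_nbij' (fun x => ⟨(oddFactorProd (x.1 - single x.2 1) / 2, x.2), x.1 - single x.2 1⟩)
    (fun y => ⟨y.2 + single y.1.2 1, y.1.2⟩) ?_ ?_ ?_ ?_ fun _ _ => rfl
  · rintro ⟨ℓ, n⟩ hx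
    rw [mem_sigma] at hx ⊢
    exact tsub_single_mem_oddFactorizations hx.1 hx.2
  · rintro ⟨⟨k, n⟩, ℓ⟩ hy
    rw [mem_sigma] at hy ⊢
    exact ⟨add_single_mem_oddFactorizations hy.1 hy.2, by simp⟩
  · rintro ⟨ℓ, n⟩ hx
    rw [tsub_single_add_single_of_mem_support (mem_sigma.1 hx).2]
  · rintro ⟨⟨k, n⟩, ℓ⟩ hy
    have hℓ := (mem_oddFactorizations.1 (mem_sigma.1 hy).2).2
    simp only [add_tsub_cancel_right, hℓ]
    rw [show (2 * k + 1) / 2 = k by omega]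

variable {R : Type*} [CommSemiring R]

noncomputable def oddFactorizationSum (w : ℕ → R) (m : ℕ) : R :=
  ∑ ℓ ∈ oddFactorizations m, weightedMultinomial w ℓ

theorem oddFactorizationSum_zero (w : ℕ → R) : oddFactorizationSum w 0 = 1 := by
  rw [oddFactorizationSum, oddFactorizations_zero, sum_singleton, weightedMultinomial_zero]

theorem oddFactorizationSum_eq_sum (w : ℕ → R) {m : ℕ} (hm : 1 ≤ m) :
    oddFactorizationSum w m = ∑ k ∈ range m, ∑ n ∈ Icc 1 m,
      if (2 * k + 1) * (2 * n + 1) = 2 * m + 1 then w n * oddFactorizationSum w k else 0 := by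
  calc oddFactorizationSum w m
      = ∑ ℓ ∈ oddFactorizations m, ∑ n ∈ ℓ.support,
          w n * weightedMultinomial w (ℓ - single n 1) :=
        sum_congr rfl fun ℓ hℓ => weightedMultinomial_eq_sum w <|
          ne_of_mem_of_not_mem hℓ (zero_notMem_oddFactorizations (by omega))
    _ = ∑ y ∈ (oddDivisorPairs m).sigma (oddFactorizations ·.1),
          w y.1.2 * weightedMultinomial w y.2 := by
        rw [← sum_sigma_oddFactorizations_support fun n ℓ => w n * weightedMultinomial w ℓ,
          sum_sigma]
    _ = ∑ q ∈ oddDivisorPairs m, w q.2 * oddFactorizationSum w q.1 := by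
        simp only [sum_sigma, oddFactorizationSum, mul_sum]
    _ = _ := by
        rw [oddDivisorPairs, sum_filter, sum_product]

theorem coe_oddFactorizations (m : ℕ) :
    (oddFactorizations m : Set (ℕ →₀ ℕ)) = {ℓ : ℕ →₀ ℕ | (∀ n ∈ ℓ.support, 1 ≤ n)
      ∧ (ℓ.prod fun n k => (2 * n + 1) ^ k) = 2 * m + 1} :=
  Set.ext fun _ => mem_oddFactorizations

theorem closed_form_for_p_general (e : ℕ → ℝ) (p : ℕ → ℝ)
    (hp0 : p 0 = 1 / e 0)
    (hrec : ∀ m : ℕ, 1 ≤ m →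
      p m = -(1 / e 0) * ∑ k ∈ Finset.range m, ∑ n ∈ Finset.Icc 1 m,
        p k * e n * (if (2 * k + 1) * (2 * n + 1) = 2 * m + 1 then 1 else 0)) :
    ∀ m : ℕ,
      p m = (1 / e 0) *
        ∑ᶠ ℓ ∈ {ℓ : ℕ →₀ ℕ | (∀ n ∈ ℓ.support, 1 ≤ n)
            ∧ (ℓ.prod fun n k => (2 * n + 1) ^ k) = 2 * m + 1},
          (Nat.multinomial ℓ.support ℓ : ℝ) * ℓ.prod (fun n k => (-e n / e 0) ^ k) := by
  have hclosed : ∀ m, p m = 1 / e 0 * oddFactorizationSum (fun n => -e n / e 0) m := by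
    intro m
    induction m using Nat.strong_induction_on with
    | _ m ih =>
      rcases Nat.eq_zero_or_pos m with rfl | hm
      · rw [hp0, oddFactorizationSum_zero, mul_one]
      · rw [hrec m hm, oddFactorizationSum_eq_sum _ hm, mul_sum, mul_sum]
        refine sum_congr rfl fun k hk => ?_
        rw [mul_sum, mul_sum]
        refine sum_congr rfl fun n _ => ?_
        rw [ih k (mem_range.1 hk)]
        split_ifs <;> ring
  intro m
  rw [hclosed m, ← coe_oddFactorizations, finsum_mem_coe_finset]
  rfl

/-- Step 1 of the proof of Lemma 1: the recursively defined coefficients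
`p₁ = 1/e₁`, `p_{2m+1} = -(1/e₁) Σ_{k,n} p_{2k+1} e_{2n+1} δ_{(2k+1)(2n+1),2m+1}`
admit the closed form
`p_{2m+1} = (1/e₁) Σ_{3^{ℓ₃}5^{ℓ₅}⋯=2m+1} ((ℓ₃+ℓ₅+⋯)!/(ℓ₃!ℓ₅!⋯)) ∏ (-e_{2n+1}/e₁)^{ℓ_{2n+1}}`,
the finite sum running over finitely supported multi-indices over the odd integers `≥ 3`. -/
theorem closed_form_for_p (e : ℕ → ℝ) (he1 : e 0 ≠ 0) (p : ℕ → ℝ)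
    (hp0 : p 0 = 1 / e 0)
    (hrec : ∀ m : ℕ, 1 ≤ m →
      p m = -(1 / e 0) * ∑ k ∈ Finset.range m, ∑ n ∈ Finset.Icc 1 m,
        p k * e n * (if (2 * k + 1) * (2 * n + 1) = 2 * m + 1 then 1 else 0)) :
    ∀ m : ℕ,
      p m = (1 / e 0) *
        ∑ᶠ ℓ ∈ {ℓ : ℕ →₀ ℕ | (∀ n ∈ ℓ.support, 1 ≤ n)
            ∧ (ℓ.prod fun n k => (2 * n + 1) ^ k) = 2 * m + 1},
          (Nat.multinomial ℓ.support ℓ : ℝ) * ℓ.prod (fun n k => (-e n / e 0) ^ k) :=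
  closed_form_for_p_general e p hp0 hrec
end

section
/- Suppose e_1 > 0, e_{2n+1} ≤ 0 for n ≥ 1, and Σ_{n≥1} (2n+1)^{3/2} (-e_{2n+1}) < e_1. Define C = Σ_{n≥1} (2n+1)^{3/2}(-e_{2n+1})/e_1, so 0 ≤ C < 1. Then the coefficients p_{2m+1} defined by the recursion p_1 = 1/e_1, p_{2m+1} = -(1/e_1) Σ_{(2k+1)(2n+1)=2m+1, n≥1} p_{2k+1} e_{2n+1} satisfy 0 ≤ p_{2m+1} ≤ (1/e_1) · (1/(1-C)) · (2m+1)^{-3/2}, and hence Σ_{m≥0} p_{2m+1} converges absolutely. -/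
open Finset

/-- Step 2 of the proof of Lemma 1: if `e₁ > 0`, `e_{2n+1} ≤ 0` for `n ≥ 1` and
`C = Σ_{n≥1} (2n+1)^{3/2}(-e_{2n+1})/e₁ < 1`, then the recursively defined
coefficients `p_{2m+1}` satisfy `0 ≤ p_{2m+1} ≤ (1/e₁)(1/(1-C))(2m+1)^{-3/2}`,
and hence `Σ p_{2m+1}` converges absolutely. -/
theorem p_bound_and_summable (e : ℕ → ℝ) (he1 : 0 < e 0)
    (hneg : ∀ n : ℕ, 1 ≤ n → e n ≤ 0)
    (hsum : Summable fun n : ℕ => (2 * ((n : ℝ) + 1) + 1) ^ ((3 : ℝ) / 2) * (-e (n + 1)))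
    (hlt : (∑' n : ℕ, (2 * ((n : ℝ) + 1) + 1) ^ ((3 : ℝ) / 2) * (-e (n + 1))) < e 0)
    (C : ℝ)
    (hC : C = (∑' n : ℕ, (2 * ((n : ℝ) + 1) + 1) ^ ((3 : ℝ) / 2) * (-e (n + 1))) / e 0)
    (p : ℕ → ℝ) (hp0 : p 0 = 1 / e 0)
    (hrec : ∀ m : ℕ, 1 ≤ m →
      p m = -(1 / e 0) * ∑ k ∈ Finset.range m, ∑ n ∈ Finset.Icc 1 m,
        p k * e n * (if (2 * k + 1) * (2 * n + 1) = 2 * m + 1 then 1 else 0)) :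
    (0 ≤ C ∧ C < 1)
    ∧ (∀ m : ℕ, 0 ≤ p m
        ∧ p m ≤ (1 / e 0) * (1 / (1 - C)) * (2 * (m : ℝ) + 1) ^ (-(3 : ℝ) / 2))
    ∧ Summable p := by
  set S : ℝ := ∑' n : ℕ, (2 * ((n : ℝ) + 1) + 1) ^ ((3 : ℝ) / 2) * (-e (n + 1)) with hSdef
  have hterm_nonneg : ∀ n : ℕ,
      0 ≤ (2 * ((n : ℝ) + 1) + 1) ^ ((3 : ℝ) / 2) * (-e (n + 1)) := by
    intro n
    apply mul_nonneg (Real.rpow_nonneg (by positivity) _)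
    simpa using hneg (n + 1) (Nat.succ_le_succ (Nat.zero_le n))
  have hS0 : 0 ≤ S := tsum_nonneg hterm_nonneg
  have hC0 : 0 ≤ C := by rw [hC]; exact div_nonneg hS0 he1.le
  have hC1 : C < 1 := by rw [hC]; exact (div_lt_one he1).mpr hlt
  have h1C : 0 < 1 - C := by linarith
  set B : ℝ := 1 / e 0 * (1 / (1 - C)) with hBdef
  have hB0 : 0 ≤ B := by positivity
  have hSC : S = C * e 0 := by rw [hC]; field_simp
  -- partial sums of the series are bounded by S
  have hpart : ∀ m : ℕ,
      (∑ n ∈ Icc 1 m, (2 * (n : ℝ) + 1) ^ ((3 : ℝ) / 2) * (-e n)) ≤ S := by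
    intro m
    have h1 : (∑ n ∈ Icc 1 m, (2 * (n : ℝ) + 1) ^ ((3 : ℝ) / 2) * (-e n))
        = ∑ j ∈ range m, (2 * ((j : ℝ) + 1) + 1) ^ ((3 : ℝ) / 2) * (-e (j + 1)) := by
      rw [← Finset.Ico_add_one_right_eq_Icc, Finset.sum_Ico_eq_sum_range]
      refine Finset.sum_congr rfl fun j _ => ?_
      push_cast
      ring_nf
    rw [h1]
    exact Summable.sum_le_tsum (range m) (fun j _ => hterm_nonneg j) hsum
  -- sum of indicators is at most 1
  have hind : ∀ m n : ℕ,
      (∑ k ∈ range m, (if (2 * k + 1) * (2 * n + 1) = 2 * m + 1 then (1 : ℝ) else 0)) ≤ 1 := by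
    intro m n
    rw [Finset.sum_boole]
    have hcard : ((range m).filter fun k => (2 * k + 1) * (2 * n + 1) = 2 * m + 1).card ≤ 1 := by
      apply Finset.card_le_one.mpr
      intro a ha b hb
      simp only [Finset.mem_filter] at ha hb
      have := ha.2.trans hb.2.symm
      have h2 : 2 * a + 1 = 2 * b + 1 :=
        Nat.eq_of_mul_eq_mul_right (Nat.succ_pos _) this
      omega
    exact_mod_cast hcard
  -- main induction
  have key : ∀ m : ℕ, 0 ≤ p m ∧ p m ≤ B * (2 * (m : ℝ) + 1) ^ (-(3 : ℝ) / 2) := by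
    intro m
    induction m using Nat.strong_induction_on with
    | _ m ih =>
      rcases Nat.eq_zero_or_pos m with rfl | hm
      · constructor
        · rw [hp0]; positivity
        · rw [hp0]
          simp only [Nat.cast_zero, mul_zero, zero_add, Real.one_rpow, mul_one]
          rw [hBdef]
          have h1 : (1 : ℝ) ≤ 1 / (1 - C) := by
            rw [le_div_iff₀ h1C]; linarith
          have := mul_le_mul_of_nonneg_left h1 (le_of_lt (by positivity : (0:ℝ) < 1 / e 0))
          simpa using this
      · -- m ≥ 1
        have hrw : p m = (1 / e 0) * ∑ n ∈ Icc 1 m, ∑ k ∈ range m,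
            p k * (-e n) * (if (2 * k + 1) * (2 * n + 1) = 2 * m + 1 then (1:ℝ) else 0) := by
          rw [hrec m hm, Finset.sum_comm]
          have : ∀ n k : ℕ, p k * (-e n) * (if (2 * k + 1) * (2 * n + 1) = 2 * m + 1 then (1:ℝ) else 0)
              = -(p k * e n * (if (2 * k + 1) * (2 * n + 1) = 2 * m + 1 then (1:ℝ) else 0)) := by
            intro n k; ring
          simp_rw [this, Finset.sum_neg_distrib]
          ring
        have hnn : ∀ n ∈ Icc 1 m, ∀ k ∈ range m,
            0 ≤ p k * (-e n) * (if (2 * k + 1) * (2 * n + 1) = 2 * m + 1 then (1:ℝ) else 0) := by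
          intro n hn k hk
          have hk' := (ih k (Finset.mem_range.mp hk)).1
          have hn' : 1 ≤ n := (Finset.mem_Icc.mp hn).1
          have he' : 0 ≤ -e n := by simpa using hneg n hn'
          have : (0:ℝ) ≤ (if (2 * k + 1) * (2 * n + 1) = 2 * m + 1 then (1:ℝ) else 0) := by
            split <;> norm_num
          exact mul_nonneg (mul_nonneg hk' he') this
        constructor
        · rw [hrw]
          apply mul_nonneg (by positivity)
          exact Finset.sum_nonneg fun n hn => Finset.sum_nonneg (hnn n hn)
        · rw [hrw]
          have step1 : ∀ n ∈ Icc 1 m, (∑ k ∈ range m,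
              p k * (-e n) * (if (2 * k + 1) * (2 * n + 1) = 2 * m + 1 then (1:ℝ) else 0))
              ≤ B * (2 * (m : ℝ) + 1) ^ (-(3 : ℝ) / 2)
                  * ((2 * (n : ℝ) + 1) ^ ((3 : ℝ) / 2) * (-e n)) := by
            intro n hn
            have hn' : 1 ≤ n := (Finset.mem_Icc.mp hn).1
            have he' : 0 ≤ -e n := by simpa using hneg n hn'
            set c : ℝ := B * (2 * (m : ℝ) + 1) ^ (-(3 : ℝ) / 2)
                * ((2 * (n : ℝ) + 1) ^ ((3 : ℝ) / 2) * (-e n)) with hcdef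
            have hc0 : 0 ≤ c := by
              apply mul_nonneg (mul_nonneg hB0 (Real.rpow_nonneg (by positivity) _))
              exact mul_nonneg (Real.rpow_nonneg (by positivity) _) he'
            calc (∑ k ∈ range m,
                p k * (-e n) * (if (2 * k + 1) * (2 * n + 1) = 2 * m + 1 then (1:ℝ) else 0))
                ≤ ∑ k ∈ range m,
                  c * (if (2 * k + 1) * (2 * n + 1) = 2 * m + 1 then (1:ℝ) else 0) := by
                  apply Finset.sum_le_sum
                  intro k hk
                  by_cases hcond : (2 * k + 1) * (2 * n + 1) = 2 * m + 1
                  · simp only [hcond, if_pos, if_true, mul_one]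
                    have hpk := (ih k (Finset.mem_range.mp hk)).2
                    have hcast : (2 * (k : ℝ) + 1) * (2 * (n : ℝ) + 1) = 2 * (m : ℝ) + 1 := by
                      exact_mod_cast congrArg (Nat.cast : ℕ → ℝ) hcond
                    have hkpos : (0:ℝ) < 2 * (k : ℝ) + 1 := by positivity
                    have hnpos : (0:ℝ) < 2 * (n : ℝ) + 1 := by positivity
                    have hrpow : (2 * (m : ℝ) + 1) ^ (-(3 : ℝ) / 2) * (2 * (n : ℝ) + 1) ^ ((3 : ℝ) / 2)
                        = (2 * (k : ℝ) + 1) ^ (-(3 : ℝ) / 2) := by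
                      rw [← hcast, Real.mul_rpow hkpos.le hnpos.le, mul_assoc,
                        ← Real.rpow_add hnpos]
                      norm_num
                    have h1 : p k * (-e n) ≤ B * (2 * (k : ℝ) + 1) ^ (-(3 : ℝ) / 2) * (-e n) :=
                      mul_le_mul_of_nonneg_right hpk he'
                    rw [hcdef]
                    calc p k * (-e n) ≤ B * (2 * (k : ℝ) + 1) ^ (-(3 : ℝ) / 2) * (-e n) := h1
                      _ = B * (2 * (m : ℝ) + 1) ^ (-(3 : ℝ) / 2)
                          * ((2 * (n : ℝ) + 1) ^ ((3 : ℝ) / 2) * (-e n)) := by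
                          rw [← hrpow]; ring
                  · simp [hcond]
              _ = c * ∑ k ∈ range m,
                  (if (2 * k + 1) * (2 * n + 1) = 2 * m + 1 then (1:ℝ) else 0) := by
                  rw [Finset.mul_sum]
              _ ≤ c * 1 := mul_le_mul_of_nonneg_left (hind m n) hc0
              _ = c := mul_one c
          calc (1 / e 0) * ∑ n ∈ Icc 1 m, ∑ k ∈ range m,
              p k * (-e n) * (if (2 * k + 1) * (2 * n + 1) = 2 * m + 1 then (1:ℝ) else 0)
              ≤ (1 / e 0) * ∑ n ∈ Icc 1 m, B * (2 * (m : ℝ) + 1) ^ (-(3 : ℝ) / 2)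
                  * ((2 * (n : ℝ) + 1) ^ ((3 : ℝ) / 2) * (-e n)) := by
                apply mul_le_mul_of_nonneg_left (Finset.sum_le_sum step1) (by positivity)
            _ = (1 / e 0) * (B * (2 * (m : ℝ) + 1) ^ (-(3 : ℝ) / 2)
                  * ∑ n ∈ Icc 1 m, (2 * (n : ℝ) + 1) ^ ((3 : ℝ) / 2) * (-e n)) := by
                rw [← Finset.mul_sum]
            _ ≤ (1 / e 0) * (B * (2 * (m : ℝ) + 1) ^ (-(3 : ℝ) / 2) * S) := by
                apply mul_le_mul_of_nonneg_left _ (by positivity)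
                exact mul_le_mul_of_nonneg_left (hpart m)
                  (mul_nonneg hB0 (Real.rpow_nonneg (by positivity) _))
            _ = B * (2 * (m : ℝ) + 1) ^ (-(3 : ℝ) / 2) * C := by
                rw [hSC]; field_simp
            _ ≤ B * (2 * (m : ℝ) + 1) ^ (-(3 : ℝ) / 2) := by
                nlinarith [mul_nonneg hB0 (Real.rpow_nonneg
                  (by positivity : (0:ℝ) ≤ 2 * (m : ℝ) + 1) (-(3 : ℝ) / 2))]
  refine ⟨⟨hC0, hC1⟩, fun m => (key m), ?_⟩
  -- summability
  have hg : Summable fun m : ℕ => B * (2 * (m : ℝ) + 1) ^ (-(3 : ℝ) / 2) := by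
    apply Summable.mul_left
    have h1 : Summable fun m : ℕ => ((m : ℝ) + 1) ^ (-(3 : ℝ) / 2) := by
      have h2 : Summable fun m : ℕ => ((m : ℝ)) ^ (-(3 : ℝ) / 2) :=
        Real.summable_nat_rpow.mpr (by norm_num)
      have := (summable_nat_add_iff 1).mpr h2
      simpa using this
    apply Summable.of_nonneg_of_le (fun m => Real.rpow_nonneg (by positivity) _) _ h1
    intro m
    apply Real.rpow_le_rpow_of_nonpos (by positivity) (by linarith [Nat.cast_nonneg (α := ℝ) m]) (by norm_num)
  exact Summable.of_nonneg_of_le (fun m => (key m).1) (fun m => (key m).2) hg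
end

section
/- Let ρ be a probability density on [φ_A - π/2, φ_A + π/2] such that for every angle φ_B ∈ [φ_A - π, φ_A + π], ∫ ρ(φ) sign(cos(φ - φ_B)) dφ = cos(φ_B - φ_A). Then ρ(φ) = (1/2) cos(φ - φ_A) (as densities, i.e., almost everywhere given continuity). -/
open Real Set intervalIntegral MeasureTheory

/-!
Take `φ_B = ψ + π/2` with `ψ` in the support. Then `sign (cos (φ - φ_B)) = sign (sin (φ - ψ))` is
`-1` to the left of `ψ` and `+1` to the right of it, so the hypothesis says
`(1 - F ψ) - F ψ = cos (ψ + π/2 - φ_A) = -sin (ψ - φ_A)` for the distribution function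
`F ψ = ∫_{φ_A - π/2}^ψ ρ`. Hence `F ψ = (1 + sin (ψ - φ_A)) / 2`, and differentiating gives `ρ`.
-/

theorem integral_mul_eq_sub_of_eqOn_Ioo {f s : ℝ → ℝ} {a ψ b : ℝ} (haψ : a ≤ ψ) (hψb : ψ ≤ b)
    (hfa : IntervalIntegrable f volume a ψ) (hfb : IntervalIntegrable f volume ψ b)
    (hneg : EqOn s (-1) (Ioo a ψ)) (hpos : EqOn s 1 (Ioo ψ b)) :
    ∫ x in a..b, f x * s x = (∫ x in ψ..b, f x) - ∫ x in a..ψ, f x := by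
  have hleft : EqOn (fun x => f x * s x) (fun x => -f x) (uIoo a ψ) := by
    rw [uIoo_of_le haψ]
    intro x hx
    simp [hneg hx]
  have hright : EqOn (fun x => f x * s x) f (uIoo ψ b) := by
    rw [uIoo_of_le hψb]
    intro x hx
    simp [hpos hx]
  rw [← integral_add_adjacent_intervals (hfa.neg.congr_uIoo hleft.symm)
      (hfb.congr_uIoo hright.symm), integral_congr_uIoo hleft, integral_congr_uIoo hright,
    intervalIntegral.integral_neg]
  ring

theorem cos_sub_add_pi_div_two_eq_sin (x ψ : ℝ) : cos (x - (ψ + π / 2)) = sin (x - ψ) := by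
  rw [show x - (ψ + π / 2) = x - ψ - π / 2 by ring, cos_sub_pi_div_two]

theorem eqOn_ite_cos_nonneg_neg_one (ψ : ℝ) :
    EqOn (fun x => if 0 ≤ cos (x - (ψ + π / 2)) then (1 : ℝ) else -1) (-1) (Ioo (ψ - π) ψ) := by
  intro x hx
  have hsin : sin (x - ψ) < 0 :=
    sin_neg_of_neg_of_neg_pi_lt (by linarith [hx.2]) (by linarith [hx.1])
  simp [cos_sub_add_pi_div_two_eq_sin, hsin]

theorem eqOn_ite_cos_nonneg_one (ψ : ℝ) :
    EqOn (fun x => if 0 ≤ cos (x - (ψ + π / 2)) then (1 : ℝ) else -1) 1 (Ioo ψ (ψ + π)) := by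
  intro x hx
  have hsin : 0 ≤ sin (x - ψ) :=
    sin_nonneg_of_nonneg_of_le_pi (by linarith [hx.1]) (by linarith [hx.2])
  simp [cos_sub_add_pi_div_two_eq_sin, hsin]

theorem eqOn_of_integral_eq_of_hasDerivWithinAt {ρ G g : ℝ → ℝ} {a b : ℝ} (hab : a < b)
    (hρ : ContinuousOn ρ (Icc a b)) (hG : ∀ x ∈ Icc a b, HasDerivWithinAt G (g x) (Icc a b) x)
    (hprim : ∀ x ∈ Icc a b, ∫ t in a..x, ρ t = G x) :
    EqOn ρ g (Icc a b) := by
  intro x hx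
  have := Fact.mk hx
  have hint : IntervalIntegrable ρ volume a x :=
    (hρ.mono (uIcc_subset_Icc (left_mem_Icc.2 hab.le) hx)).intervalIntegrable
  have hF : HasDerivWithinAt (fun u => ∫ t in a..u, ρ t) (ρ x) (Icc a b) x :=
    integral_hasDerivWithinAt_right hint (hρ.stronglyMeasurableAtFilter_nhdsWithin
      measurableSet_Icc x) (hρ x hx)
  exact (uniqueDiffOn_Icc hab x hx).eq_deriv _ (hF.congr (fun u hu => (hprim u hu).symm)
    (hprim x hx).symm) (hG x hx)

theorem integral_eq_one_add_sin_div_two_of_sign_integrals {φA : ℝ} {ρ : ℝ → ℝ}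
    (hcont : ContinuousOn ρ (Icc (φA - π / 2) (φA + π / 2)))
    (hnorm : ∫ φ in (φA - π / 2)..(φA + π / 2), ρ φ = 1)
    (h : ∀ φB ∈ Icc (φA - π) (φA + π),
      ∫ φ in (φA - π / 2)..(φA + π / 2),
          ρ φ * (if 0 ≤ Real.cos (φ - φB) then (1 : ℝ) else -1)
        = Real.cos (φB - φA)) :
    ∀ ψ ∈ Icc (φA - π / 2) (φA + π / 2),
      ∫ φ in (φA - π / 2)..ψ, ρ φ = (1 + sin (ψ - φA)) / 2 := by
  rintro ψ ⟨haψ, hψb⟩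
  have hint : ∀ x ∈ Icc (φA - π / 2) (φA + π / 2), ∀ y ∈ Icc (φA - π / 2) (φA + π / 2),
      IntervalIntegrable ρ volume x y := fun x hx y hy =>
    (hcont.mono (uIcc_subset_Icc hx hy)).intervalIntegrable
  have hfa := hint _ (left_mem_Icc.2 (by linarith)) ψ ⟨haψ, hψb⟩
  have hfb := hint ψ ⟨haψ, hψb⟩ _ (right_mem_Icc.2 (by linarith))
  have hsign := h (ψ + π / 2) ⟨by linarith, by linarith⟩
  rw [integral_mul_eq_sub_of_eqOn_Ioo haψ hψb hfa hfb
      ((eqOn_ite_cos_nonneg_neg_one ψ).mono (Ioo_subset_Ioo_left (by linarith)))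
      ((eqOn_ite_cos_nonneg_one ψ).mono (Ioo_subset_Ioo_right (by linarith))),
    show ψ + π / 2 - φA = ψ - φA + π / 2 by ring, cos_add_pi_div_two] at hsign
  rw [← integral_add_adjacent_intervals hfa hfb] at hnorm
  linarith

theorem density_determined_by_sign_integrals_general (φA : ℝ) (ρ : ℝ → ℝ)
    (hcont : ContinuousOn ρ (Icc (φA - π / 2) (φA + π / 2)))
    (hnorm : ∫ φ in (φA - π / 2)..(φA + π / 2), ρ φ = 1)
    (h : ∀ φB ∈ Icc (φA - π) (φA + π),
      ∫ φ in (φA - π / 2)..(φA + π / 2),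
          ρ φ * (if 0 ≤ Real.cos (φ - φB) then (1 : ℝ) else -1)
        = Real.cos (φB - φA)) :
    ∀ φ ∈ Icc (φA - π / 2) (φA + π / 2), ρ φ = (1 / 2) * Real.cos (φ - φA) := by
  have hderiv : ∀ x ∈ Icc (φA - π / 2) (φA + π / 2), HasDerivWithinAt
      (fun u => (1 + sin (u - φA)) / 2) (cos (x - φA) / 2) (Icc (φA - π / 2) (φA + π / 2)) x :=
    fun x _ => by simpa using (((hasDerivAt_sin (x - φA)).comp_sub_const x φA).const_add 1
      |>.div_const 2).hasDerivWithinAt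
  intro φ hφ
  rw [eqOn_of_integral_eq_of_hasDerivWithinAt (by linarith [pi_pos]) hcont hderiv
    (integral_eq_one_add_sin_div_two_of_sign_integrals hcont hnorm h) hφ]
  ring

/-- If a continuous probability density `ρ` on `[φ_A - π/2, φ_A + π/2]` satisfies
`∫ ρ(φ) sign(cos(φ - φ_B)) dφ = cos(φ_B - φ_A)` for every `φ_B ∈ [φ_A - π, φ_A + π]`,
then `ρ(φ) = (1/2) cos(φ - φ_A)` on the interval. -/
theorem density_determined_by_sign_integrals (φA : ℝ) (ρ : ℝ → ℝ)
    (hcont : ContinuousOn ρ (Icc (φA - π / 2) (φA + π / 2)))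
    (hpos : ∀ φ ∈ Icc (φA - π / 2) (φA + π / 2), 0 ≤ ρ φ)
    (hnorm : ∫ φ in (φA - π / 2)..(φA + π / 2), ρ φ = 1)
    (h : ∀ φB ∈ Icc (φA - π) (φA + π),
      ∫ φ in (φA - π / 2)..(φA + π / 2),
          ρ φ * (if 0 ≤ Real.cos (φ - φB) then (1 : ℝ) else -1)
        = Real.cos (φB - φA)) :
    ∀ φ ∈ Icc (φA - π / 2) (φA + π / 2), ρ φ = (1 / 2) * Real.cos (φ - φA) :=
  density_determined_by_sign_integrals_general φA ρ hcont hnorm h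
end

section
/- Define E_1(φ) = (2/π) ∫_0^{π/2} ∫_0^{π/2} sin(2θ_B) · sign(sin(θ_B + θ_C - φ)) dθ_B dθ_C. Then E_1(φ) = (32/π²) Σ_{n≥0} [1/((2n+1)²(4-(2n+1)²))] cos((2n+1)φ). -/
open Real intervalIntegral Set MeasureTheory

/-!
The `θC`-integral of the square wave `x ↦ sign (sin x)` is a difference of two values of its
primitive, the triangle wave `T x = ∑ cos ((2n+1) x) / (2n+1)²`, which equals `π/4 (π/2 - |x|)`
on `[-π, π]`. Unlike the square-wave series, this series converges absolutely and uniformly, so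
it can be integrated against `sin (2 θB)` term by term; after the reflection `θB ↦ π/2 - θB`
(using `T (π - x) = -T x`) each term is the elementary integral of `sin (2θ) cos ((2n+1) θ)`.
-/

theorem hasSum_cos_mul_div_sq {x : ℝ} (hx₀ : 0 ≤ x) (hx : x ≤ 2 * π) :
    HasSum (fun n : ℕ => cos (n * x) / n ^ 2) (x ^ 2 / 4 - π * x / 2 + π ^ 2 / 6) := by
  have hmem : x / (2 * π) ∈ Icc (0 : ℝ) 1 :=
    ⟨by positivity, (div_le_one (by positivity)).mpr hx⟩
  convert hasSum_one_div_nat_pow_mul_cos one_ne_zero hmem using 1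
  · ext n
    rw [mul_assoc, show 2 * π * (n * (x / (2 * π))) = n * x by field_simp]
    ring
  · change _ = _ * bernoulliFun 2 _
    rw [bernoulliFun_two]
    field_simp
    norm_num
    ring

theorem hasSum_cos_odd_mul_div_sq {x : ℝ} (hx₀ : 0 ≤ x) (hx : x ≤ π) :
    HasSum (fun n : ℕ => cos ((2 * n + 1) * x) / (2 * n + 1) ^ 2) (π / 4 * (π / 2 - x)) := by
  set f : ℕ → ℝ := fun n => cos (n * x) / n ^ 2
  have hall : HasSum f _ := hasSum_cos_mul_div_sq hx₀ (by linarith [pi_pos])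
  -- the even part is the full series at `2 x`, divided by 4; the odd part is what remains
  have heven : HasSum (fun n => f (2 * n)) (x ^ 2 / 4 - π * x / 4 + π ^ 2 / 24) := by
    have h := (hasSum_cos_mul_div_sq (x := 2 * x) (by linarith) (by linarith)).div_const 4
    have hf : (fun n => f (2 * n)) = fun n : ℕ => cos (n * (2 * x)) / n ^ 2 / 4 := by
      funext n
      simp only [f]
      push_cast
      ring_nf
    rw [hf, show x ^ 2 / 4 - π * x / 4 + π ^ 2 / 24
      = ((2 * x) ^ 2 / 4 - π * (2 * x) / 2 + π ^ 2 / 6) / 4 by ring]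
    exact h
  obtain ⟨s, hodd⟩ : Summable fun n => f (2 * n + 1) :=
    hall.summable.comp_injective fun a b h => by simpa using h
  have hs : _ = _ := hall.unique (heven.even_add_odd hodd)
  convert hodd using 1
  · funext n
    simp only [f]
    push_cast
    rfl
  · linear_combination hs

noncomputable def squareWave (x : ℝ) : ℝ := if 0 ≤ sin x then 1 else -1

noncomputable def triangleWave (x : ℝ) : ℝ :=
  ∑' n : ℕ, cos ((2 * n + 1) * x) / (2 * n + 1) ^ 2

theorem abs_cos_odd_mul_div_sq_le (n : ℕ) (x : ℝ) :
    |cos ((2 * n + 1) * x) / (2 * n + 1) ^ 2| ≤ 1 / (2 * (n : ℝ) + 1) ^ 2 := by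
  rw [abs_div, abs_of_pos (by positivity : (0 : ℝ) < (2 * n + 1) ^ 2)]
  exact div_le_div_of_nonneg_right (abs_cos_le_one _) (by positivity)

theorem summable_one_div_odd_sq : Summable fun n : ℕ => 1 / (2 * (n : ℝ) + 1) ^ 2 := by
  simpa using (hasSum_cos_odd_mul_div_sq le_rfl pi_pos.le).summable

theorem hasSum_triangleWave (x : ℝ) :
    HasSum (fun n : ℕ => cos ((2 * n + 1) * x) / (2 * n + 1) ^ 2) (triangleWave x) :=
  (summable_one_div_odd_sq.of_norm_bounded fun n =>
    (Real.norm_eq_abs _).trans_le (abs_cos_odd_mul_div_sq_le n x)).hasSum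

@[fun_prop]
theorem continuous_triangleWave : Continuous triangleWave :=
  continuous_tsum (fun n => by fun_prop) summable_one_div_odd_sq
    fun n x => (Real.norm_eq_abs _).trans_le (abs_cos_odd_mul_div_sq_le n x)

theorem triangleWave_eq_of_abs_le {x : ℝ} (hx : |x| ≤ π) :
    triangleWave x = π / 4 * (π / 2 - |x|) := by
  have heven : triangleWave x = triangleWave |x| := by
    rcases abs_choice x with h | h <;> rw [h]
    simp only [triangleWave, mul_neg, cos_neg]
  rw [heven, (hasSum_cos_odd_mul_div_sq (abs_nonneg x) hx).tsum_eq.symm]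
  rfl

theorem triangleWave_periodic : Function.Periodic triangleWave (2 * π) := by
  intro x
  simp only [triangleWave]
  congr 1 with n
  rw [mul_add, show (2 * (n : ℝ) + 1) * (2 * π) = ((2 * n + 1 : ℕ) : ℝ) * (2 * π) by
    push_cast; ring, cos_add_nat_mul_two_pi]

theorem triangleWave_pi_sub (x : ℝ) : triangleWave (π - x) = -triangleWave x := by
  simp only [triangleWave, ← tsum_neg]
  congr 1 with n
  rw [mul_sub, show (2 * (n : ℝ) + 1) * π = ((2 * n + 1 : ℕ) : ℝ) * π by push_cast; ring,
    cos_nat_mul_pi_sub, pow_succ, pow_mul]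
  simp [neg_div]

theorem hasDerivAt_triangleWave {x : ℝ} (hx : sin x ≠ 0) :
    HasDerivAt triangleWave (-(π / 4) * squareWave x) x := by
  set m := toIocDiv two_pi_pos (-π) x
  set y := toIocMod two_pi_pos (-π) x
  have hy : y ∈ Ioc (-π) π := by
    simpa [show -π + 2 * π = π by ring] using toIocMod_mem_Ioc two_pi_pos (-π) x
  have hxy : x - m • (2 * π) = y := self_sub_toIocDiv_zsmul two_pi_pos (-π) x
  have hsin : sin y = sin x := by rw [← hxy, zsmul_eq_mul, sin_sub_int_mul_two_pi]
  have hyπ : y < π := hy.2.lt_of_ne fun h => hx (by rw [← hsin, h, sin_pi])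
  have hlocal : triangleWave =ᶠ[nhds y] fun z => π / 4 * (π / 2 - |z|) := by
    filter_upwards [Ioo_mem_nhds hy.1 hyπ] with z hz
    exact triangleWave_eq_of_abs_le (abs_le.mpr ⟨hz.1.le, hz.2.le⟩)
  have hy_deriv : HasDerivAt triangleWave (-(π / 4) * squareWave y) y := by
    refine HasDerivAt.congr_of_eventuallyEq ?_ hlocal
    rcases lt_trichotomy y 0 with hneg | hzero | hpos
    · have hs : squareWave y = -1 := if_neg (not_le.mpr (sin_neg_of_neg_of_neg_pi_lt hneg hy.1))
      rw [hs]
      exact ((hasDerivAt_abs_neg hneg).const_sub _).const_mul _ |>.congr_deriv (by ring)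
    · exact absurd (by rw [← hsin, hzero, sin_zero]) hx
    · have hs : squareWave y = 1 := if_pos (sin_pos_of_pos_of_lt_pi hpos hyπ).le
      rw [hs]
      exact ((hasDerivAt_abs_pos hpos).const_sub _).const_mul _ |>.congr_deriv (by ring)
  have hshift : (fun z => triangleWave (z - m • (2 * π))) = triangleWave :=
    funext fun z => triangleWave_periodic.sub_zsmul_eq m
  rw [← hshift, show squareWave x = squareWave y by simp only [squareWave, hsin]]
  exact HasDerivAt.comp_sub_const x _ (hxy ▸ hy_deriv)

theorem intervalIntegrable_squareWave (a b : ℝ) : IntervalIntegrable squareWave volume a b := by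
  refine (intervalIntegrable_const (c := (1 : ℝ))).mono_fun' ?_
    (Filter.Eventually.of_forall fun x => ?_)
  · exact (Measurable.ite (measurableSet_le measurable_const continuous_sin.measurable)
      measurable_const measurable_const).aestronglyMeasurable
  · change ‖squareWave x‖ ≤ 1
    unfold squareWave
    split_ifs <;> simp

theorem integral_squareWave (a b : ℝ) :
    ∫ x in a..b, squareWave x = 4 / π * (triangleWave a - triangleWave b) := by
  have hzeros : {x : ℝ | sin x = 0}.Countable :=
    (countable_range fun n : ℤ => (n : ℝ) * π).mono fun x hx => sin_eq_zero_iff.mp hx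
  rw [integral_eq_of_hasDerivAt_off_countable (fun x => -(4 / π) * triangleWave x) _ hzeros
    (continuous_const.mul continuous_triangleWave).continuousOn (fun x hx => ?_)
    (intervalIntegrable_squareWave a b)]
  · ring
  · exact ((hasDerivAt_triangleWave hx.2).const_mul _).congr_deriv (by field_simp)

theorem integral_squareWave_add (a b c : ℝ) :
    ∫ t in a..b, squareWave (c + t) = 4 / π * (triangleWave (c + a) - triangleWave (c + b)) := by
  rw [intervalIntegral.integral_comp_add_left, integral_squareWave]

theorem hasDerivAt_cos_mul_div {c : ℝ} (hc : c ≠ 0) (x : ℝ) :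
    HasDerivAt (fun x => cos (c * x) / c) (-sin (c * x)) x :=
  (((hasDerivAt_id' x).const_mul c).cos.div_const c).congr_deriv (by field_simp)

theorem integral_sin_two_mul_mul_cos_odd_mul (n : ℕ) :
    ∫ θ in (0 : ℝ)..π / 2, sin (2 * θ) * cos ((2 * n + 1) * θ)
      = 2 / (4 - (2 * n + 1) ^ 2) := by
  set k : ℝ := 2 * n + 1
  have hk₁ : 2 + k ≠ 0 := by positivity
  have hk₂ : 2 - k ≠ 0 := by
    intro h
    have : (2 : ℝ) * n = 1 := by linarith
    norm_cast at this
    omega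
  have hcos₁ : cos ((2 + k) * (π / 2)) = 0 :=
    cos_eq_zero_iff.mpr ⟨n + 1, by simp only [k]; push_cast; ring⟩
  have hcos₂ : cos ((2 - k) * (π / 2)) = 0 :=
    cos_eq_zero_iff.mpr ⟨-n, by simp only [k]; push_cast; ring⟩
  -- product to sum: `sin (2θ) cos (kθ) = (sin ((2 + k) θ) + sin ((2 - k) θ)) / 2`
  have hderiv : ∀ θ, HasDerivAt
      (fun θ => -(cos ((2 + k) * θ) / (2 + k) + cos ((2 - k) * θ) / (2 - k)) / 2)
      (sin (2 * θ) * cos (k * θ)) θ := fun θ => by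
    refine ((hasDerivAt_cos_mul_div hk₁ θ).add (hasDerivAt_cos_mul_div hk₂ θ)).neg.div_const 2
      |>.congr_deriv ?_
    rw [add_mul, sub_mul, sin_add, sin_sub]
    ring
  have hk : 4 - k ^ 2 ≠ 0 := by
    rw [show 4 - k ^ 2 = (2 + k) * (2 - k) by ring]
    exact mul_ne_zero hk₁ hk₂
  rw [integral_eq_sub_of_hasDerivAt (fun θ _ => hderiv θ)
    (Continuous.intervalIntegrable (by fun_prop) _ _)]
  simp only [hcos₁, hcos₂, mul_zero, cos_zero]
  field_simp
  ring

theorem hasSum_integral_sin_two_mul_mul_triangleWave (φ : ℝ) :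
    HasSum (fun n : ℕ => 4 / ((2 * n + 1) ^ 2 * (4 - (2 * n + 1) ^ 2)) * cos ((2 * n + 1) * φ))
      (∫ θ in (0 : ℝ)..π / 2,
        sin (2 * θ) * (triangleWave (θ - φ) + triangleWave (θ + φ))) := by
  set F : ℕ → ℝ → ℝ := fun n θ => sin (2 * θ) *
    (cos ((2 * n + 1) * (θ - φ)) / (2 * n + 1) ^ 2
      + cos ((2 * n + 1) * (θ + φ)) / (2 * n + 1) ^ 2)
  have hF : ∀ n θ, F n θ = 2 * cos ((2 * n + 1) * φ) / (2 * n + 1) ^ 2 *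
      (sin (2 * θ) * cos ((2 * n + 1) * θ)) := fun n θ => by
    simp only [F, mul_sub, mul_add, cos_sub, cos_add]
    ring
  have hbound : ∀ n θ, ‖F n θ‖ ≤ 2 / (2 * (n : ℝ) + 1) ^ 2 := fun n θ => by
    rw [Real.norm_eq_abs, abs_mul]
    calc _ ≤ 1 * (1 / (2 * (n : ℝ) + 1) ^ 2 + 1 / (2 * (n : ℝ) + 1) ^ 2) :=
          mul_le_mul (abs_sin_le_one _) ((abs_add_le _ _).trans
            (add_le_add (abs_cos_odd_mul_div_sq_le _ _) (abs_cos_odd_mul_div_sq_le _ _)))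
            (abs_nonneg _) zero_le_one
      _ = _ := by ring
  refine (hasSum_integral_of_dominated_convergence (fun n _ => 2 / (2 * (n : ℝ) + 1) ^ 2)
    (F := F) (fun n => by fun_prop) (fun n => .of_forall fun θ _ => hbound n θ)
    (.of_forall fun _ _ => summable_one_div_odd_sq.mul_left 2 |>.congr fun n => by ring)
    intervalIntegrable_const
    (.of_forall fun θ _ => ((hasSum_triangleWave _).add (hasSum_triangleWave _)).mul_left _))
    |>.congr_fun fun n => ?_
  simp only [hF, intervalIntegral.integral_const_mul, integral_sin_two_mul_mul_cos_odd_mul]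
  field_simp
  ring

theorem integral_sin_two_mul_mul_triangleWave_sub (φ : ℝ) :
    ∫ θ in (0 : ℝ)..π / 2,
        sin (2 * θ) * (triangleWave (θ - φ) - triangleWave (θ - φ + π / 2))
      = ∫ θ in (0 : ℝ)..π / 2,
          sin (2 * θ) * (triangleWave (θ - φ) + triangleWave (θ + φ)) := by
  have hreflect := intervalIntegral.integral_comp_sub_left (a := 0) (b := π / 2)
    (fun θ => sin (2 * θ) * triangleWave (θ - φ + π / 2)) (π / 2)
  have hsymm : ∀ θ, sin (2 * (π / 2 - θ)) * triangleWave (π / 2 - θ - φ + π / 2)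
      = -(sin (2 * θ) * triangleWave (θ + φ)) := fun θ => by
    rw [show 2 * (π / 2 - θ) = π - 2 * θ by ring, sin_pi_sub,
      show π / 2 - θ - φ + π / 2 = π - (θ + φ) by ring, triangleWave_pi_sub, mul_neg]
  simp only [hsymm, intervalIntegral.integral_neg, sub_zero, sub_self] at hreflect
  simp only [mul_sub, mul_add]
  rw [intervalIntegral.integral_sub, intervalIntegral.integral_add, ← hreflect, sub_neg_eq_add]
  all_goals exact Continuous.intervalIntegrable (by fun_prop) _ _

/-- The double-integral form of the protocol correlation equals its Fourier series:
`E₁(φ) = (2/π)∫₀^{π/2}∫₀^{π/2} sin(2θ_B) sign(sin(θ_B+θ_C-φ)) dθ_B dθ_C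
       = (32/π²) Σ_{n≥0} cos((2n+1)φ)/((2n+1)²(4-(2n+1)²))`. -/
theorem E1_integral_eq_series (φ : ℝ) :
    (2 / π) * ∫ θB in (0 : ℝ)..(π / 2), ∫ θC in (0 : ℝ)..(π / 2),
        Real.sin (2 * θB) * (if 0 ≤ Real.sin (θB + θC - φ) then (1 : ℝ) else -1)
      = (32 / π ^ 2) * ∑' n : ℕ,
          (1 / ((2 * (n : ℝ) + 1) ^ 2 * (4 - (2 * (n : ℝ) + 1) ^ 2)))
            * Real.cos ((2 * (n : ℝ) + 1) * φ) := by
  have hinner : ∀ θB, ∫ θC in (0 : ℝ)..(π / 2),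
      sin (2 * θB) * (if 0 ≤ sin (θB + θC - φ) then (1 : ℝ) else -1)
      = 4 / π * (sin (2 * θB) * (triangleWave (θB - φ) - triangleWave (θB - φ + π / 2))) :=
    fun θB => by
      have hsq : (fun θC => if 0 ≤ sin (θB + θC - φ) then (1 : ℝ) else -1)
          = fun θC => squareWave (θB - φ + θC) := by
        simp only [squareWave, add_sub_right_comm]
      rw [intervalIntegral.integral_const_mul, hsq, integral_squareWave_add, add_zero,
        mul_left_comm]
  simp only [hinner, intervalIntegral.integral_const_mul, integral_sin_two_mul_mul_triangleWave_sub,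
    ← (hasSum_integral_sin_two_mul_mul_triangleWave φ).tsum_eq,
    div_eq_mul_one_div (4 : ℝ) ((2 * _ + 1) ^ 2 * _), mul_assoc, tsum_mul_left]
  ring
end

section
/- The function E_1 defined by E_1(φ) = 1 - (2φ - sin 2φ)/π on [0,π], extended evenly and 2π-periodically to ℝ, satisfies |E_1(φ)| ≥ |cos φ| for all φ ∈ ℝ, with E_1(0) = 1 and E_1(π) = -1. -/
open Real Set


lemma g_hasDeriv (x : ℝ) :
    HasDerivAt (fun y => 1 - (2 * y - Real.sin (2 * y)) / π - Real.cos y)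
      (Real.sin x - 4 / π * Real.sin x ^ 2) x := by
  have h1 : HasDerivAt (fun y : ℝ => 2 * y) 2 x := by
    simpa using (hasDerivAt_id x).const_mul 2
  have h2 : HasDerivAt (fun y : ℝ => Real.sin (2 * y)) (Real.cos (2 * x) * 2) x :=
    (Real.hasDerivAt_sin (2 * x)).comp x h1
  have h3 : HasDerivAt (fun y : ℝ => 1 - (2 * y - Real.sin (2 * y)) / π - Real.cos y)
      (0 - (2 - Real.cos (2 * x) * 2) / π - (-Real.sin x)) x :=
    ((hasDerivAt_const x (1:ℝ)).sub ((h1.sub h2).div_const π)).sub (Real.hasDerivAt_cos x)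
  convert h3 using 1
  have hs := Real.sin_sq_add_cos_sq x
  have hc := Real.cos_two_mul x
  have hπ : (π : ℝ) ≠ 0 := Real.pi_ne_zero
  field_simp
  nlinarith [hs, hc]

lemma f_ge_cos : ∀ x ∈ Icc (0:ℝ) (π/2), Real.cos x ≤ 1 - (2 * x - Real.sin (2 * x)) / π := by
  set g : ℝ → ℝ := fun y => 1 - (2 * y - Real.sin (2 * y)) / π - Real.cos y with hg
  have hcont : Continuous g := by fun_prop
  have hderiv : ∀ x : ℝ, deriv g x = Real.sin x - 4 / π * Real.sin x ^ 2 :=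
    fun x => (g_hasDeriv x).deriv
  set a : ℝ := Real.arcsin (π/4) with ha
  have hπ4 : (π:ℝ)/4 ≤ 1 := by nlinarith [Real.pi_le_four]
  have hπ4' : (0:ℝ) ≤ π/4 := by positivity
  have hsa : Real.sin a = π/4 := Real.sin_arcsin (by linarith) hπ4
  have ha0 : 0 ≤ a := Real.arcsin_nonneg.2 hπ4'
  have ha2 : a ≤ π/2 := Real.arcsin_le_pi_div_two _
  have hπpos : 0 < π := Real.pi_pos
  have hmono : MonotoneOn g (Icc 0 a) := by
    apply monotoneOn_of_deriv_nonneg (convex_Icc 0 a) hcont.continuousOn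
      (fun x _ => (g_hasDeriv x).differentiableAt.differentiableWithinAt)
    intro x hx
    rw [interior_Icc] at hx
    obtain ⟨hx1, hx2⟩ := hx
    rw [hderiv]
    have hsx0 : 0 ≤ Real.sin x := Real.sin_nonneg_of_nonneg_of_le_pi hx1.le (by linarith)
    have hsxa : Real.sin x ≤ π/4 := by
      rw [← hsa]
      exact (Real.strictMonoOn_sin ⟨by linarith, by linarith⟩ ⟨by linarith, ha2⟩ hx2).le
    have h1 : 4/π * Real.sin x ≤ 1 := by
      have := mul_le_mul_of_nonneg_left hsxa (by positivity : (0:ℝ) ≤ 4/π)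
      have h2 : 4/π * (π/4) = 1 := by field_simp
      linarith
    nlinarith [mul_nonneg hsx0 (sub_nonneg.2 h1)]
  have hanti : AntitoneOn g (Icc a (π/2)) := by
    apply antitoneOn_of_deriv_nonpos (convex_Icc a (π/2)) hcont.continuousOn
      (fun x _ => (g_hasDeriv x).differentiableAt.differentiableWithinAt)
    intro x hx
    rw [interior_Icc] at hx
    obtain ⟨hx1, hx2⟩ := hx
    rw [hderiv]
    have hsx0 : 0 ≤ Real.sin x := Real.sin_nonneg_of_nonneg_of_le_pi (by linarith) (by linarith)
    have hsxa : π/4 ≤ Real.sin x := by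
      rw [← hsa]
      exact (Real.strictMonoOn_sin ⟨by linarith, ha2⟩ ⟨by linarith, hx2.le⟩ hx1).le
    have h1 : 1 ≤ 4/π * Real.sin x := by
      have := mul_le_mul_of_nonneg_left hsxa (by positivity : (0:ℝ) ≤ 4/π)
      have h2 : 4/π * (π/4) = 1 := by field_simp
      linarith
    nlinarith [mul_nonneg hsx0 (sub_nonneg.2 h1)]
  have hg0 : g 0 = 0 := by simp [hg]
  have hgπ2 : g (π/2) = 0 := by
    have h : 2 * (π/2) = π := by ring
    simp [hg, h, Real.sin_pi, Real.cos_pi_div_two, Real.pi_ne_zero]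
  intro x hx
  have hgx : 0 ≤ g x := by
    rcases le_total x a with h | h
    · have := hmono ⟨le_refl 0, ha0⟩ ⟨hx.1, h⟩ hx.1
      linarith [hg0 ▸ this]
    · have := hanti ⟨h, hx.2⟩ ⟨ha2, le_refl _⟩ hx.2
      linarith [hgπ2 ▸ this]
  simp only [hg] at hgx
  linarith

lemma abs_cos_le_abs_f : ∀ x ∈ Icc (0:ℝ) π,
    |Real.cos x| ≤ |1 - (2 * x - Real.sin (2 * x)) / π| := by
  intro x hx
  rcases le_total x (π/2) with h | h
  · have hc0 : 0 ≤ Real.cos x := Real.cos_nonneg_of_mem_Icc ⟨by linarith [hx.1], h⟩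
    have hf := f_ge_cos x ⟨hx.1, h⟩
    rw [abs_of_nonneg hc0, abs_of_nonneg (le_trans hc0 hf)]
    exact hf
  · set y := π - x with hy
    have hy0 : 0 ≤ y := by simp [hy]; linarith [hx.2]
    have hy2 : y ≤ π/2 := by simp [hy]; linarith
    have hc0 : 0 ≤ Real.cos y := Real.cos_nonneg_of_mem_Icc ⟨by linarith, hy2⟩
    have hf := f_ge_cos y ⟨hy0, hy2⟩
    have hcos : Real.cos x = -Real.cos y := by
      rw [hy]; rw [Real.cos_pi_sub]; ring
    have hsin : Real.sin (2 * x) = -Real.sin (2 * y) := by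
      have : 2 * x = 2 * π - 2 * y := by rw [hy]; ring
      rw [this, Real.sin_sub, Real.sin_two_pi, Real.cos_two_pi]; ring
    have hfx : 1 - (2 * x - Real.sin (2 * x)) / π = -(1 - (2 * y - Real.sin (2 * y)) / π) := by
      rw [hsin]
      have hx2y : x = π - y := by rw [hy]; ring
      rw [hx2y]
      field_simp
      ring
    rw [hcos, hfx, abs_neg, abs_neg, abs_of_nonneg hc0, abs_of_nonneg (le_trans hc0 hf)]
    exact hf

/-- The even `2π`-periodic extension of `E₁(φ) = 1 - (2φ - sin 2φ)/π` from `[0, π]`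
satisfies `|E₁(φ)| ≥ |cos φ|` for all real `φ`, with `E₁(0) = 1` and `E₁(π) = -1`. -/
theorem E1_stronger_than_cos (E1 : ℝ → ℝ)
    (hval : ∀ φ ∈ Icc (0 : ℝ) π, E1 φ = 1 - (2 * φ - Real.sin (2 * φ)) / π)
    (heven : ∀ φ : ℝ, E1 (-φ) = E1 φ)
    (hper : ∀ φ : ℝ, E1 (φ + 2 * π) = E1 φ) :
    (∀ φ : ℝ, |Real.cos φ| ≤ |E1 φ|) ∧ E1 0 = 1 ∧ E1 π = -1 := by
  have hπpos : 0 < π := Real.pi_pos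
  have hP : Function.Periodic E1 (2 * π) := hper
  have key : ∀ φ ∈ Icc (0:ℝ) π, |Real.cos φ| ≤ |E1 φ| := by
    intro φ hφ
    rw [hval φ hφ]
    exact abs_cos_le_abs_f φ hφ
  refine ⟨?_, ?_, ?_⟩
  · intro φ
    set n := ⌊φ / (2 * π)⌋ with hn
    set x := φ - n * (2 * π) with hxdef
    have hx0 : 0 ≤ x := Int.sub_floor_div_mul_nonneg φ (by positivity)
    have hx2 : x < 2 * π := Int.sub_floor_div_mul_lt φ (by positivity)
    have hE : E1 φ = E1 x := (hP.sub_int_mul_eq n).symm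
    have hC : Real.cos φ = Real.cos x := by
      have : φ = x + n * (2 * π) := by rw [hxdef]; ring
      rw [this, Real.cos_add_int_mul_two_pi]
    rw [hE, hC]
    rcases le_total x π with h | h
    · exact key x ⟨hx0, h⟩
    · set y := 2 * π - x with hy
      have hy0 : 0 ≤ y := by rw [hy]; linarith
      have hyπ : y ≤ π := by rw [hy]; linarith
      have hEy : E1 x = E1 y := by
        have h1 : E1 (-y + 2 * π) = E1 (-y) := hper (-y)
        have h2 : -y + 2 * π = x := by rw [hy]; ring
        rw [← heven y, ← h1, h2]
      have hCy : Real.cos x = Real.cos y := by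
        have h2 : x = -y + 2 * π := by rw [hy]; ring
        rw [h2, show (-y + 2*π : ℝ) = -y + (1:ℤ) * (2*π) by push_cast; ring,
          Real.cos_add_int_mul_two_pi, Real.cos_neg]
      rw [hEy, hCy]
      exact key y ⟨hy0, hyπ⟩
  · rw [hval 0 ⟨le_refl 0, hπpos.le⟩]
    simp
  · rw [hval π ⟨hπpos.le, le_refl π⟩]
    rw [Real.sin_two_mul, Real.sin_pi]
    field_simp
    ring
end

section
/- For the sequence e_{2n+1} = (32/π²)/((2n+1)²(4-(2n+1)²)), one has Σ_{n≥1} (2n+1)^{3/2}(-e_{2n+1}) < e_1, i.e. the constant C_{3/2} = Σ_{n≥1} (2n+1)^{3/2}(-e_{2n+1})/e_1 satisfies 0 ≤ C_{3/2} < 1. -/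
open Real Filter

private lemma E1aux_partial (f : ℕ → ℝ) (N : ℕ) :
    ∑ n ∈ Finset.range N, (f n - f (n + 2)) = f 0 + f 1 - f N - f (N + 1) := by
  induction N with
  | zero => simp
  | succ N ih => rw [Finset.sum_range_succ, ih]; ring_nf

/-- For the Fourier coefficients `e_{2n+1} = (32/π²)/((2n+1)²(4-(2n+1)²))` of `E₁`,
`Σ_{n≥1} (2n+1)^{3/2} (-e_{2n+1}) < e₁`, i.e. the constant
`C_{3/2} = Σ_{n≥1} (2n+1)^{3/2}(-e_{2n+1})/e₁` satisfies `0 ≤ C_{3/2} < 1`. -/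
theorem E1_coefficients_C32_lt_one (e : ℕ → ℝ)
    (he : ∀ n : ℕ, e n = (32 / π ^ 2) / ((2 * (n : ℝ) + 1) ^ 2 * (4 - (2 * (n : ℝ) + 1) ^ 2)))
    (C : ℝ)
    (hC : C = (∑' n : ℕ, (2 * ((n : ℝ) + 1) + 1) ^ ((3 : ℝ) / 2) * (-e (n + 1))) / e 0) :
    (∑' n : ℕ, (2 * ((n : ℝ) + 1) + 1) ^ ((3 : ℝ) / 2) * (-e (n + 1))) < e 0
    ∧ 0 ≤ C ∧ C < 1 := by
  have hπ2 : (0:ℝ) < π ^ 2 := by positivity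
  have he0 : e 0 = 32 / (3 * π ^ 2) := by
    rw [he 0]; push_cast; ring
  have he0pos : 0 < e 0 := by rw [he0]; positivity
  -- the comparison sequence g n = (2n+3)^2 * (-e (n+1))
  set f : ℕ → ℝ := fun n => (8 / π ^ 2) / (2 * (n:ℝ) + 1) with hf
  set g : ℕ → ℝ := fun n => f n - f (n + 2) with hg
  have hden : ∀ n : ℕ, (0:ℝ) < (2 * ((n:ℝ) + 1) + 1) ^ 2 * ((2 * ((n:ℝ) + 1) + 1) ^ 2 - 4) := by
    intro n
    have h0 : (0:ℝ) ≤ (n:ℝ) := Nat.cast_nonneg n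
    have h1 : (3:ℝ) ≤ 2 * ((n:ℝ) + 1) + 1 := by linarith
    have h2 : (9:ℝ) ≤ (2 * ((n:ℝ) + 1) + 1) ^ 2 := by nlinarith
    exact mul_pos (by linarith) (by linarith)
  have hneg : ∀ n : ℕ, -e (n + 1) =
      (32 / π ^ 2) / ((2 * ((n:ℝ) + 1) + 1) ^ 2 * ((2 * ((n:ℝ) + 1) + 1) ^ 2 - 4)) := by
    intro n
    have h2 : (9:ℝ) ≤ (2 * ((n:ℝ) + 1) + 1) ^ 2 := by
      have h0 : (0:ℝ) ≤ (n:ℝ) := Nat.cast_nonneg n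
      nlinarith
    have hb : ((2 * ((n:ℝ) + 1) + 1) ^ 2) ≠ 0 := by positivity
    have hc : (4 - (2 * ((n:ℝ) + 1) + 1) ^ 2) ≠ 0 := by intro h; nlinarith
    have hd : ((2 * ((n:ℝ) + 1) + 1) ^ 2 - 4) ≠ 0 := by intro h; nlinarith
    rw [he (n + 1)]
    push_cast
    field_simp
    ring
  have hnegpos : ∀ n : ℕ, 0 < -e (n + 1) := by
    intro n
    rw [hneg n]
    exact div_pos (by positivity) (hden n)
  have hgval : ∀ n : ℕ, g n = (2 * ((n:ℝ) + 1) + 1) ^ 2 * (-e (n + 1)) := by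
    intro n
    rw [hg, hneg n, hf]
    have hpi : (π:ℝ) ^ 2 ≠ 0 := ne_of_gt hπ2
    have h1 : (2 * ((n:ℝ) + 1) + 1) ≠ 0 := by positivity
    have h3 : (2 * (n:ℝ) + 1) ≠ 0 := by positivity
    have h5 : (2 * ((n:ℝ) + 2) + 1) ≠ 0 := by positivity
    have h6 : (2 * (n:ℝ) + 5) ≠ 0 := by positivity
    have hd : ((2 * ((n:ℝ) + 1) + 1) ^ 2 - 4) ≠ 0 := by
      have : (2 * ((n:ℝ) + 1) + 1) ^ 2 - 4 = (2 * (n:ℝ) + 1) * (2 * (n:ℝ) + 5) := by ring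
      rw [this]; exact mul_ne_zero h3 h6
    push_cast
    field_simp
    ring
  -- g has sum e 0
  have hfLim : Tendsto f atTop (nhds 0) := by
    have h2 : Tendsto (fun n : ℕ => 2 * (n:ℝ) + 1) atTop atTop := by
      apply tendsto_atTop_add_const_right
      exact tendsto_natCast_atTop_atTop.const_mul_atTop (by norm_num)
    have := (tendsto_const_nhds : Tendsto (fun _ : ℕ => 8 / π ^ 2) atTop (nhds (8 / π ^ 2))).div_atTop h2
    simpa [hf] using this
  have hgnonneg : ∀ n : ℕ, 0 ≤ g n := by
    intro n
    rw [hgval n]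
    exact le_of_lt (mul_pos (by positivity) (hnegpos n))
  have hgsum : HasSum g (e 0) := by
    rw [hasSum_iff_tendsto_nat_of_nonneg hgnonneg]
    have : Tendsto (fun N : ℕ => f 0 + f 1 - f N - f (N + 1)) atTop
        (nhds (f 0 + f 1 - 0 - 0)) := by
      exact ((tendsto_const_nhds.sub hfLim).sub (hfLim.comp (tendsto_add_atTop_nat 1)))
    have hval : f 0 + f 1 - 0 - 0 = e 0 := by
      rw [hf, he0]; norm_num; field_simp; ring
    rw [hval] at this
    convert this using 2 with N
    exact E1aux_partial f N
  -- pointwise strict comparison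
  have hlt : ∀ n : ℕ, (2 * ((n:ℝ) + 1) + 1) ^ ((3:ℝ)/2) * (-e (n + 1)) < g n := by
    intro n
    rw [hgval n]
    apply mul_lt_mul_of_pos_right _ (hnegpos n)
    have hx : (1:ℝ) < 2 * ((n:ℝ) + 1) + 1 := by
      have : (0:ℝ) ≤ (n:ℝ) := Nat.cast_nonneg n
      linarith
    calc (2 * ((n:ℝ) + 1) + 1) ^ ((3:ℝ)/2) < (2 * ((n:ℝ) + 1) + 1) ^ ((2:ℝ)) :=
          rpow_lt_rpow_of_exponent_lt hx (by norm_num)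
      _ = (2 * ((n:ℝ) + 1) + 1) ^ 2 := by
          rw [show ((2:ℝ)) = ((2:ℕ):ℝ) by norm_num, rpow_natCast]
  have hsnonneg : ∀ n : ℕ, 0 ≤ (2 * ((n:ℝ) + 1) + 1) ^ ((3:ℝ)/2) * (-e (n + 1)) := by
    intro n
    exact le_of_lt (mul_pos (rpow_pos_of_pos (by positivity) _) (hnegpos n))
  have hmain : (∑' n : ℕ, (2 * ((n : ℝ) + 1) + 1) ^ ((3 : ℝ) / 2) * (-e (n + 1))) < e 0 := by
    have := Summable.tsum_lt_tsum_of_nonneg hsnonneg (fun n => (hlt n).le) (hlt 0) hgsum.summable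
    rwa [hgsum.tsum_eq] at this
  refine ⟨hmain, ?_, ?_⟩
  · rw [hC]
    exact div_nonneg (tsum_nonneg hsnonneg) he0pos.le
  · rw [hC, div_lt_one he0pos]
    exact hmain
end

section
/- Σ_{n≥0} 1/((2n+1)²(4-(2n+1)²)) = π²/32 and Σ_{n≥0} 1/(4-(2n+1)²) = 0. -/
open Real

private noncomputable def cAux (n : ℕ) : ℝ := 1 / (2 * (n : ℝ) - 1)

private lemma denom_ne_zero (n : ℕ) : (4 : ℝ) - (2 * (n : ℝ) + 1) ^ 2 ≠ 0 := by
  rcases n with _ | m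
  · norm_num
  · have h : (0 : ℝ) ≤ (m : ℝ) := m.cast_nonneg
    push_cast
    nlinarith

private lemma gAux_eq (n : ℕ) :
    1 / (4 - (2 * (n : ℝ) + 1) ^ 2) = (1 / 4) * (cAux (n + 2) - cAux n) := by
  have hn : (0 : ℝ) ≤ (n : ℝ) := n.cast_nonneg
  have h1 : (2 * ((n : ℝ) + 2) - 1) ≠ 0 := by nlinarith
  have h2 : (2 * (n : ℝ) - 1) ≠ 0 := by
    rcases n with _ | m
    · norm_num
    · have h : (0 : ℝ) ≤ (m : ℝ) := m.cast_nonneg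
      push_cast; nlinarith
  have h3 := denom_ne_zero n
  unfold cAux
  push_cast
  field_simp
  ring

private lemma hasSum_gAux :
    HasSum (fun n : ℕ => 1 / (4 - (2 * (n : ℝ) + 1) ^ 2)) 0 := by
  have hbase : Summable (fun n : ℕ => 1 / ((n : ℝ) + 1) ^ 2) := by
    simpa using ((summable_nat_add_iff (f := fun n : ℕ => 1 / (n : ℝ) ^ 2) 1).mpr
      (Real.summable_one_div_nat_pow.mpr (by norm_num : 1 < 2)))
  -- summability by comparison after dropping the first term
  have hsummable : Summable (fun n : ℕ => 1 / (4 - (2 * (n : ℝ) + 1) ^ 2)) := by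
    rw [← summable_nat_add_iff 1]
    rw [← summable_neg_iff]
    refine Summable.of_nonneg_of_le (fun n => ?_) (fun n => ?_) hbase
    · have hn : (0 : ℝ) ≤ (n : ℝ) := n.cast_nonneg
      have hneg : (4 : ℝ) - (2 * ((n : ℝ) + 1) + 1) ^ 2 < 0 := by nlinarith
      push_cast
      rw [neg_nonneg]
      exact le_of_lt (div_neg_of_pos_of_neg one_pos hneg)
    · have hn : (0 : ℝ) ≤ (n : ℝ) := n.cast_nonneg
      have hpos : (0 : ℝ) < (2 * ((n : ℝ) + 1) + 1) ^ 2 - 4 := by nlinarith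
      have hpos2 : (0 : ℝ) < ((n : ℝ) + 1) ^ 2 := by positivity
      push_cast
      have heq : -(1 / (4 - (2 * ((n : ℝ) + 1) + 1) ^ 2)) =
          1 / ((2 * ((n : ℝ) + 1) + 1) ^ 2 - 4) := by
        rw [show (2 * ((n : ℝ) + 1) + 1) ^ 2 - 4 = -(4 - (2 * ((n : ℝ) + 1) + 1) ^ 2) from by ring,
          div_neg]
      rw [heq]
      apply one_div_le_one_div_of_le hpos2
      nlinarith
  -- partial sums telescope
  have hps : ∀ N : ℕ, ∑ n ∈ Finset.range N, 1 / (4 - (2 * (n : ℝ) + 1) ^ 2)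
      = (1 / 4) * (cAux (N + 1) + cAux N) := by
    intro N
    have hterm : ∀ n : ℕ, 1 / (4 - (2 * (n : ℝ) + 1) ^ 2)
        = (1/4) * (cAux (n+2) - cAux (n+1)) + (1/4) * (cAux (n+1) - cAux n) := by
      intro n
      rw [gAux_eq]
      ring
    calc ∑ n ∈ Finset.range N, 1 / (4 - (2 * (n : ℝ) + 1) ^ 2)
        = ∑ n ∈ Finset.range N, ((1/4) * (cAux (n+2) - cAux (n+1))
            + (1/4) * (cAux (n+1) - cAux n)) := Finset.sum_congr rfl (fun n _ => hterm n)
      _ = (1/4) * (∑ n ∈ Finset.range N, ((fun m => cAux (m+1)) (n+1) - (fun m => cAux (m+1)) n))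
            + (1/4) * (∑ n ∈ Finset.range N, (cAux (n+1) - cAux n)) := by
          rw [Finset.sum_add_distrib, ← Finset.mul_sum, ← Finset.mul_sum]
      _ = (1/4) * (cAux (N+1) - cAux 1) + (1/4) * (cAux N - cAux 0) := by
          rw [Finset.sum_range_sub (fun m => cAux (m+1)), Finset.sum_range_sub cAux]
      _ = (1/4) * (cAux (N + 1) + cAux N) := by
          have h0 : cAux 0 = -1 := by norm_num [cAux]
          have h1 : cAux 1 = 1 := by norm_num [cAux]
          rw [h0, h1]; ring
  -- partial sums tend to 0
  have hc : Filter.Tendsto cAux Filter.atTop (nhds 0) := by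
    unfold cAux
    simp only [one_div]
    apply Filter.Tendsto.inv_tendsto_atTop
    apply Filter.tendsto_atTop_add_const_right
    exact (tendsto_natCast_atTop_atTop (R := ℝ)).const_mul_atTop (by norm_num)
  have hc1 : Filter.Tendsto (fun N : ℕ => cAux (N + 1)) Filter.atTop (nhds 0) :=
    hc.comp (Filter.tendsto_add_atTop_nat 1)
  have htend : Filter.Tendsto
      (fun N : ℕ => ∑ n ∈ Finset.range N, 1 / (4 - (2 * (n : ℝ) + 1) ^ 2))
      Filter.atTop (nhds 0) := by
    have h := ((hc1.add hc).const_mul (1/4 : ℝ))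
    simp only [add_zero, mul_zero] at h
    exact Filter.Tendsto.congr (fun N => (hps N).symm) h
  have h0 : (∑' n : ℕ, 1 / (4 - (2 * (n : ℝ) + 1) ^ 2)) = 0 :=
    tendsto_nhds_unique hsummable.hasSum.tendsto_sum_nat htend
  exact h0 ▸ hsummable.hasSum

set_option maxHeartbeats 1000000 in
private lemma hasSum_odd_sq :
    HasSum (fun n : ℕ => 1 / (2 * (n : ℝ) + 1) ^ 2) (π ^ 2 / 8) := by
  have htot : HasSum (fun n : ℕ => (1 : ℝ) / (n : ℝ) ^ 2) (π ^ 2 / 6) := hasSum_zeta_two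
  have heven : HasSum (fun k : ℕ => (1 : ℝ) / ((2 * k : ℕ) : ℝ) ^ 2) (π ^ 2 / 24) := by
    have h14 := htot.mul_left (1 / 4)
    have heq : ∀ k : ℕ, (1 : ℝ) / ((2 * k : ℕ) : ℝ) ^ 2 = (1 / 4) * (1 / (k : ℝ) ^ 2) := by
      intro k
      rcases eq_or_ne (k : ℝ) 0 with h | h
      · push_cast
        simp [h]
      · push_cast
        field_simp
        ring
    rw [funext heq]
    have hval : (1 / 4 : ℝ) * (π ^ 2 / 6) = π ^ 2 / 24 := by ring
    exact hval ▸ h14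
  have hodd_summable : Summable (fun k : ℕ => (1 : ℝ) / ((2 * k + 1 : ℕ) : ℝ) ^ 2) :=
    htot.summable.comp_injective (fun a b h => by omega)
  have hodd := hodd_summable.hasSum
  have hsum := HasSum.even_add_odd (f := fun n : ℕ => (1 : ℝ) / (n : ℝ) ^ 2) heven hodd
  have hO : π ^ 2 / 24 + (∑' k : ℕ, (1 : ℝ) / ((2 * k + 1 : ℕ) : ℝ) ^ 2) = π ^ 2 / 6 :=
    hsum.unique htot
  have hval : (∑' k : ℕ, (1 : ℝ) / ((2 * k + 1 : ℕ) : ℝ) ^ 2) = π ^ 2 / 8 := by linarith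
  rw [hval] at hodd
  have hfun : (fun n : ℕ => 1 / (2 * (n : ℝ) + 1) ^ 2)
      = (fun k : ℕ => (1 : ℝ) / ((2 * k + 1 : ℕ) : ℝ) ^ 2) := by
    funext n; push_cast; ring
  rw [hfun]
  exact hodd

/-- The two series identities behind `E₁(0) = 1` and `E₁''(0) = 0`:
`Σ_{n≥0} 1/((2n+1)²(4-(2n+1)²)) = π²/32` and `Σ_{n≥0} 1/(4-(2n+1)²) = 0`. -/
theorem series_identities_for_E1 :
    (∑' n : ℕ, 1 / ((2 * (n : ℝ) + 1) ^ 2 * (4 - (2 * (n : ℝ) + 1) ^ 2)) = π ^ 2 / 32)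
    ∧ (∑' n : ℕ, 1 / (4 - (2 * (n : ℝ) + 1) ^ 2) = 0) := by
  constructor
  · have h1 := hasSum_odd_sq.mul_left (1 / 4)
    have h2 := hasSum_gAux.mul_left (1 / 4)
    have h := h1.add h2
    have heq : ∀ n : ℕ,
        1 / ((2 * (n : ℝ) + 1) ^ 2 * (4 - (2 * (n : ℝ) + 1) ^ 2)) =
        1 / 4 * (1 / (2 * (n : ℝ) + 1) ^ 2) + 1 / 4 * (1 / (4 - (2 * (n : ℝ) + 1) ^ 2)) := by
      intro n
      have h3 := denom_ne_zero n
      have h4 : (2 * (n : ℝ) + 1) ^ 2 ≠ 0 := by positivity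
      field_simp
      ring
    rw [funext heq, h.tsum_eq]
    ring
  · exact hasSum_gAux.tsum_eq
end
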